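/- arXiv:2507.11835 — 4 statements merged into one kernel-verified Lean document; each statement's English description precedes it below -/
import Mathlib

section
/- Let t ≥ s ≥ 2 be integers with t ≥ 2s, and let G be a graph on s + t vertices with distinct vertices u and v such that G contains a path on t vertices joining u and v but G contains no path on t + 1 vertices joining u and v. Then the complement of G contains a path on 2⌈s/2⌉ + 1 vertices. -/
open SimpleGraph

section Aux

variable {α : Type*} {G : SimpleGraph α}

lemma support_getElem_eq_getVert {u v : α} (p : G.Walk u v) :
    ∀ (i : ℕ) (h : i < p.support.length), p.support[i] = p.getVert i := by
  induction p with
  | nil => intro i h; simp at h; subst h; simp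
  | cons hadj q ih =>
    intro i h
    cases i with
    | zero => simp
    | succ n =>
      rw [Walk.getVert_cons_succ]
      have h' : n < q.support.length := by
        simpa [Walk.length_support] using
          (by simpa [Walk.length_support] using h : n + 1 < q.length + 2)
      calc (Walk.cons hadj q).support[n+1] = q.support[n] := by
            simp [Walk.support_cons]
        _ = q.getVert n := ih n h'

lemma getVert_injOn' {u v : α} {p : G.Walk u v} (hp : p.IsPath) {i j : ℕ}
    (hi : i ≤ p.length) (hj : j ≤ p.length) (hij : p.getVert i = p.getVert j) : i = j := by
  have hi' : i < p.support.length := by rw [Walk.length_support]; omega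
  have hj' : j < p.support.length := by rw [Walk.length_support]; omega
  have h2 := hp.support_nodup.getElem_inj_iff (hi := hi') (hj := hj')
  rw [support_getElem_eq_getVert, support_getElem_eq_getVert] at h2
  exact h2.mp hij

lemma insert_vertex {u v : α} (P : G.Walk u v) (hP : P.IsPath) :
    ∀ (i : ℕ), i < P.length → ∀ w, w ∉ P.support →
    G.Adj (P.getVert i) w → G.Adj w (P.getVert (i+1)) →
    ∃ Q : G.Walk u v, Q.IsPath ∧ Q.support.Perm (w :: P.support) := by
  induction P with
  | nil => intro i hi; simp at hi
  | cons hadj q ih =>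
    rename_i a b c
    intro i hi w hw h1 h2
    have hq : q.IsPath := ((Walk.cons_isPath_iff _ _).mp hP).1
    have hanq : a ∉ q.support := ((Walk.cons_isPath_iff _ _).mp hP).2
    have hwq : w ∉ q.support := fun h => hw (by simp [Walk.support_cons, h])
    have hwa : w ≠ a := fun h => hw (by simp [Walk.support_cons, h])
    cases i with
    | zero =>
      have h2' : G.Adj w b := by simpa using h2
      have h1' : G.Adj a w := by simpa using h1
      refine ⟨Walk.cons h1' (Walk.cons h2' q), ?_, ?_⟩
      · rw [Walk.cons_isPath_iff, Walk.cons_isPath_iff]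
        refine ⟨⟨hq, hwq⟩, ?_⟩
        simp only [Walk.support_cons, List.mem_cons]
        push_neg
        exact ⟨fun h => hwa h.symm, hanq⟩
      · simp only [Walk.support_cons]
        exact List.Perm.swap w a _
    | succ n =>
      have hn : n < q.length := by simpa [Walk.length_cons] using hi
      obtain ⟨Q', hQ', hperm⟩ := ih hq n hn w hwq (by simpa using h1) (by simpa using h2)
      refine ⟨Walk.cons hadj Q', ?_, ?_⟩
      · rw [Walk.cons_isPath_iff]
        refine ⟨hQ', fun h => ?_⟩
        have := hperm.mem_iff.mp h
        simp only [List.mem_cons] at this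
        rcases this with h' | h'
        · exact hwa h'.symm
        · exact hanq h'
      · simp only [Walk.support_cons]
        exact (hperm.cons a).trans (List.Perm.swap w a q.support)

lemma assemble (H : SimpleGraph α) : ∀ (n : ℕ) (a w : ℕ → α),
    (∀ i < n, H.Adj (a i) (w i)) → (∀ i < n, H.Adj (w i) (a (i+1))) →
    ∃ p : H.Walk (a 0) (a n),
      p.support.Perm ((List.range (n+1)).map a ++ (List.range n).map w) := by
  intro n
  induction n with
  | zero => intro a w _ _; exact ⟨Walk.nil, by simp [List.range_succ]⟩
  | succ n ih =>
    intro a w h1 h2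
    obtain ⟨p', hp'⟩ := ih (fun i => a (i+1)) (fun i => w (i+1))
      (fun i hi => h1 (i+1) (by omega)) (fun i hi => h2 (i+1) (by omega))
    refine ⟨Walk.cons (h1 0 (by omega)) (Walk.cons (h2 0 (by omega)) p'), ?_⟩
    have hr : ∀ (k : ℕ) (f : ℕ → α), (List.range (k+1)).map f
        = f 0 :: (List.range k).map (fun i => f (i+1)) := by
      intro k f
      rw [List.range_succ_eq_map, List.map_cons, List.map_map]
      rfl
    rw [hr (n+1) a, hr n w]
    simp only [Walk.support_cons]
    refine List.Perm.cons (a 0) ?_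
    exact (hp'.cons (w 0)).trans List.perm_middle.symm

/-- Both `w` and `w'` are complement-adjacent to a common endpoint of the `k`-th edge of `P`. -/
def Mono (G : SimpleGraph α) {u v : α} (P : G.Walk u v) (k : ℕ) (w w' : α) : Prop :=
  (Gᶜ.Adj (P.getVert (2*k)) w ∧ Gᶜ.Adj (P.getVert (2*k)) w') ∨
  (Gᶜ.Adj (P.getVert (2*k+1)) w ∧ Gᶜ.Adj (P.getVert (2*k+1)) w')

lemma Mono.symm' {u v : α} {P : G.Walk u v} {k : ℕ} {w w' : α}
    (h : Mono G P k w w') : Mono G P k w' w := by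
  rcases h with ⟨h1, h2⟩ | ⟨h1, h2⟩
  · exact Or.inl ⟨h2, h1⟩
  · exact Or.inr ⟨h2, h1⟩

/-- The data of a chain of `j` outside vertices linked by `j-1` distinct edges of `P`. -/
def GoodData (G : SimpleGraph α) {u v : α} (P : G.Walk u v) (S : Finset α) (s j : ℕ) : Prop :=
  ∃ (ws : List α) (ks : List ℕ), ws.length = j ∧ ks.length + 1 = j ∧ ws.Nodup ∧ ks.Nodup ∧
    (∀ x ∈ ws, x ∈ S) ∧ (∀ k ∈ ks, k < s) ∧
    (∀ i, i + 1 < j → Mono G P (ks.getD i 0) (ws.getD i u) (ws.getD (i+1) u))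

lemma data_of_hall {u v : α} (P : G.Walk u v) (S : Finset α) (s m : ℕ) (hm : 1 ≤ m)
    (R : Finset α) (K : Finset ℕ) (hR : m ≤ R.card) (hK : m - 1 ≤ K.card)
    (hRS : R ⊆ S) (hKs : ∀ k ∈ K, k < s)
    (hall : ∀ k ∈ K, ∀ w ∈ R, ∀ w' ∈ R, Mono G P k w w') :
    GoodData G P S s m := by
  classical
  refine ⟨R.toList.take m, K.toList.take (m-1), ?_, ?_, ?_, ?_, ?_, ?_, ?_⟩
  · rw [List.length_take, Finset.length_toList]; omega
  · rw [List.length_take, Finset.length_toList]; omega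
  · exact ((List.take_sublist _ _).nodup) R.nodup_toList
  · exact ((List.take_sublist _ _).nodup) K.nodup_toList
  · intro x hx
    exact hRS (Finset.mem_toList.mp ((List.take_sublist _ _).subset hx))
  · intro k hk
    exact hKs k (Finset.mem_toList.mp ((List.take_sublist _ _).subset hk))
  · intro i hi
    have hlR : (R.toList.take m).length = m := by
      rw [List.length_take, Finset.length_toList]; omega
    have hlK : (K.toList.take (m-1)).length = m - 1 := by
      rw [List.length_take, Finset.length_toList]; omega
    have h1 : (R.toList.take m).getD i u ∈ R := by
      rw [List.getD_eq_getElem _ _ (by omega)]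
      exact Finset.mem_toList.mp ((List.take_sublist _ _).subset (List.getElem_mem _))
    have h2 : (R.toList.take m).getD (i+1) u ∈ R := by
      rw [List.getD_eq_getElem _ _ (by omega)]
      exact Finset.mem_toList.mp ((List.take_sublist _ _).subset (List.getElem_mem _))
    have h3 : (K.toList.take (m-1)).getD i 0 ∈ K := by
      rw [List.getD_eq_getElem _ _ (by omega)]
      exact Finset.mem_toList.mp ((List.take_sublist _ _).subset (List.getElem_mem _))
    exact hall _ h3 _ h1 _ h2

lemma greedy {u v : α} (P : G.Walk u v) (S : Finset α) (s m : ℕ) (hScard : S.card = s)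
    (hm1 : 2*m ≤ s+1) (hm2 : s+1 ≤ 2*m+1) (hs : 2 ≤ s)
    (hcover : ∀ w ∈ S, ∀ k, k < s →
      Gᶜ.Adj (P.getVert (2*k)) w ∨ Gᶜ.Adj (P.getVert (2*k+1)) w) :
    ∀ j, 1 ≤ j → j ≤ m → GoodData G P S s j ∨ GoodData G P S s m := by
  classical
  intro j
  induction j with
  | zero => intro h; omega
  | succ j ih =>
    intro h1 hjm
    by_cases hj0 : j = 0
    · subst hj0
      have hSne : S.Nonempty := by
        rw [← Finset.card_pos, hScard]; omega
      obtain ⟨w0, hw0⟩ := hSne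
      exact Or.inl ⟨[w0], [], rfl, rfl, List.nodup_singleton w0, List.nodup_nil,
        by simpa using hw0, by simp, fun i hi => by omega⟩
    · rcases ih (by omega) (by omega) with hdata | hfin
      · obtain ⟨ws, ks, hwl, hkl, hwnd, hknd, hwS, hks, hmono⟩ := hdata
        set R := S \ ws.toFinset with hRdef
        set K := Finset.range s \ ks.toFinset with hKdef
        have hRS : R ⊆ S := Finset.sdiff_subset
        have hKs : ∀ k ∈ K, k < s := fun k hk =>
          Finset.mem_range.mp (Finset.mem_sdiff.mp hk).1
        have hwtf : ws.toFinset ⊆ S := fun x hx => hwS x (List.mem_toFinset.mp hx)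
        have hRcard : R.card = s - j := by
          rw [hRdef, Finset.card_sdiff_of_subset hwtf, hScard, List.toFinset_card_of_nodup hwnd, hwl]
        have hktf : ks.toFinset ⊆ Finset.range s := fun k hk =>
          Finset.mem_range.mpr (hks k (List.mem_toFinset.mp hk))
        have hKcard : K.card = s - (j - 1) := by
          rw [hKdef, Finset.card_sdiff_of_subset hktf, Finset.card_range,
            List.toFinset_card_of_nodup hknd]
          omega
        have hwhead : ws.getD 0 u ∈ S := by
          rw [List.getD_eq_getElem _ _ (by omega)]
          exact hwS _ (List.getElem_mem _)
        by_cases hex : ∃ k ∈ K, ∃ w ∈ R, Mono G P k (ws.getD 0 u) w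
        · left
          obtain ⟨k, hkK, w, hwR, hm0⟩ := hex
          have hwnotin : w ∉ ws := fun h =>
            (Finset.mem_sdiff.mp hwR).2 (List.mem_toFinset.mpr h)
          have hknotin : k ∉ ks := fun h =>
            (Finset.mem_sdiff.mp hkK).2 (List.mem_toFinset.mpr h)
          refine ⟨w :: ws, k :: ks, by simp [hwl], by simp [hkl], ?_, ?_, ?_, ?_, ?_⟩
          · exact List.nodup_cons.mpr ⟨hwnotin, hwnd⟩
          · exact List.nodup_cons.mpr ⟨hknotin, hknd⟩
          · intro x hx
            rcases List.mem_cons.mp hx with h | h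
            · exact h ▸ hRS hwR
            · exact hwS x h
          · intro k' hk'
            rcases List.mem_cons.mp hk' with h | h
            · exact h ▸ hKs k hkK
            · exact hks k' h
          · intro i hi
            cases i with
            | zero =>
              simp only [List.getD_cons_zero, List.getD_cons_succ]
              exact hm0.symm'
            | succ n =>
              simp only [List.getD_cons_succ]
              exact hmono n (by omega)
        · right
          push_neg at hex
          have hall : ∀ k ∈ K, ∀ w ∈ R, ∀ w' ∈ R, Mono G P k w w' := by
            intro k hk w hw w' hw'
            have hks' : k < s := hKs k hk
            rcases hcover _ hwhead k hks' with hx | hy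
            · have hzy : ∀ z ∈ R, Gᶜ.Adj (P.getVert (2*k+1)) z := by
                intro z hz
                rcases hcover z (hRS hz) k hks' with h | h
                · exact absurd (Or.inl ⟨hx, h⟩) (hex k hk z hz)
                · exact h
              exact Or.inr ⟨hzy w hw, hzy w' hw'⟩
            · have hzx : ∀ z ∈ R, Gᶜ.Adj (P.getVert (2*k)) z := by
                intro z hz
                rcases hcover z (hRS hz) k hks' with h | h
                · exact h
                · exact absurd (Or.inr ⟨hy, h⟩) (hex k hk z hz)
              exact Or.inl ⟨hzx w hw, hzx w' hw'⟩
          exact data_of_hall P S s m (by omega) R K (by omega) (by omega) hRS hKs hall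
      · exact Or.inr hfin

end Aux

theorem stmt15 {α : Type*} [Fintype α] (s t : ℕ) (hs : 2 ≤ s) (hst : s ≤ t)
    (ht : 2 * s ≤ t) (G : SimpleGraph α) (hcard : Fintype.card α = s + t)
    (u v : α) (huv : u ≠ v)
    (P : G.Walk u v) (hP : P.IsPath) (hlen : P.support.length = t)
    (hmax : ¬ ∃ w : G.Walk u v, w.IsPath ∧ w.support.length = t + 1) :
    ∃ (x y : α) (w : Gᶜ.Walk x y), w.IsPath ∧ w.support.length = 2 * ((s + 1) / 2) + 1 := by
  classical
  set m : ℕ := (s + 1) / 2 with hmdef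
  have hm1 : 2 * m ≤ s + 1 := by omega
  have hm2 : s + 1 ≤ 2 * m + 1 := by omega
  have hPlen : P.length + 1 = t := by
    rw [← Walk.length_support]; exact hlen
  set S : Finset α := Finset.univ \ P.support.toFinset with hSdef
  have hScard : S.card = s := by
    rw [hSdef, Finset.card_sdiff_of_subset (Finset.subset_univ _), Finset.card_univ, hcard,
      List.toFinset_card_of_nodup hP.support_nodup, hlen]
    omega
  have hSoff : ∀ w ∈ S, w ∉ P.support := fun w hw h =>
    (Finset.mem_sdiff.mp hw).2 (List.mem_toFinset.mpr h)
  have hbound : ∀ k, k < s → 2 * k + 1 ≤ P.length := by intro k hk; omega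
  have hgvmem : ∀ i, i ≤ P.length → P.getVert i ∈ P.support := fun i hi =>
    Walk.mem_support_iff_exists_getVert.mpr ⟨i, rfl, hi⟩
  have hcover : ∀ w ∈ S, ∀ k, k < s →
      Gᶜ.Adj (P.getVert (2*k)) w ∨ Gᶜ.Adj (P.getVert (2*k+1)) w := by
    intro w hw k hk
    by_contra hcon
    push_neg at hcon
    have hne1 : P.getVert (2*k) ≠ w := fun he => hSoff w hw (he ▸ hgvmem _ (by omega))
    have hne2 : P.getVert (2*k+1) ≠ w := fun he => hSoff w hw (he ▸ hgvmem _ (by omega))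
    have ha1 : G.Adj (P.getVert (2*k)) w := by
      by_contra hga
      exact hcon.1 ((G.compl_adj _ _).mpr ⟨hne1, hga⟩)
    have ha2 : G.Adj (P.getVert (2*k+1)) w := by
      by_contra hga
      exact hcon.2 ((G.compl_adj _ _).mpr ⟨hne2, hga⟩)
    obtain ⟨Q, hQpath, hQperm⟩ := insert_vertex P hP (2*k) (by omega) w (hSoff w hw)
      ha1 ha2.symm
    exact hmax ⟨Q, hQpath, by rw [hQperm.length_eq]; simp [hlen]⟩
  have hdata : GoodData G P S s m := by
    rcases greedy P S s m hScard hm1 hm2 hs hcover m (by omega) le_rfl with h | h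
    · exact h
    · exact h
  obtain ⟨ws, ks, hwl, hkl, hwnd, hknd, hwS, hks, hmono⟩ := hdata
  set K' : Finset ℕ := Finset.range s \ ks.toFinset with hK'def
  have hktf : ks.toFinset ⊆ Finset.range s := fun k hk =>
    Finset.mem_range.mpr (hks k (List.mem_toFinset.mp hk))
  have hK'card : K'.card = s - (m - 1) := by
    rw [hK'def, Finset.card_sdiff_of_subset hktf, Finset.card_range,
      List.toFinset_card_of_nodup hknd]
    omega
  obtain ⟨k0, hk0, k1, hk1, hk01⟩ := Finset.one_lt_card.mp
    (by rw [hK'card]; omega : 1 < K'.card)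
  have hk0s : k0 < s := Finset.mem_range.mp (Finset.mem_sdiff.mp hk0).1
  have hk1s : k1 < s := Finset.mem_range.mp (Finset.mem_sdiff.mp hk1).1
  have hk0ks : k0 ∉ ks := fun h => (Finset.mem_sdiff.mp hk0).2 (List.mem_toFinset.mpr h)
  have hk1ks : k1 ∉ ks := fun h => (Finset.mem_sdiff.mp hk1).2 (List.mem_toFinset.mpr h)
  set wfun : ℕ → α := fun i => ws.getD i u with hwfundef
  have hwfunS : ∀ i, i < m → wfun i ∈ S := by
    intro i hi
    have : wfun i = ws[i]'(by omega) := List.getD_eq_getElem _ _ (by omega)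
    rw [this]
    exact hwS _ (List.getElem_mem _)
  have hksmem : ∀ i, 1 ≤ i → i < m → ks.getD (i-1) 0 ∈ ks := by
    intro i h1 h2
    have : ks.getD (i-1) 0 = ks[i-1]'(by omega) := List.getD_eq_getElem _ _ (by omega)
    rw [this]
    exact List.getElem_mem _
  set keyfun : ℕ → ℕ := fun i => if i = 0 then k0 else if m ≤ i then k1 else ks.getD (i-1) 0
    with hkeydef
  have hkeyA : keyfun 0 = k0 := by simp [hkeydef]
  have hkeyB : ∀ i, i ≠ 0 → m ≤ i → keyfun i = k1 := by
    intro i h1 h2; simp [hkeydef, h1, h2]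
  have hkeyC : ∀ i, i ≠ 0 → ¬ m ≤ i → keyfun i = ks.getD (i-1) 0 := by
    intro i h1 h2; simp [hkeydef, h1, h2]
  have hmge : 1 ≤ m := by omega
  have hfull : ∀ i, ∃ e, e ≤ P.length ∧ e / 2 = keyfun i ∧
      (1 ≤ i → i ≤ m → Gᶜ.Adj (P.getVert e) (wfun (i-1))) ∧
      (i < m → Gᶜ.Adj (P.getVert e) (wfun i)) := by
    intro i
    by_cases hi0 : i = 0
    · subst hi0
      rcases hcover (wfun 0) (hwfunS 0 (by omega)) k0 hk0s with h | h
      · exact ⟨2*k0, by omega, by rw [hkeyA]; omega, fun h1 h2 => by omega, fun _ => h⟩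
      · exact ⟨2*k0+1, by omega, by rw [hkeyA]; omega, fun h1 h2 => by omega, fun _ => h⟩
    · by_cases him : m ≤ i
      · rcases hcover (wfun (m-1)) (hwfunS (m-1) (by omega)) k1 hk1s with h | h
        · refine ⟨2*k1, by omega, by rw [hkeyB i hi0 him]; omega, ?_, fun h2 => by omega⟩
          intro h1 h2
          have hieq : i = m := by omega
          rw [hieq]
          exact h
        · refine ⟨2*k1+1, by omega, by rw [hkeyB i hi0 him]; omega, ?_, fun h2 => by omega⟩
          intro h1 h2
          have hieq : i = m := by omega
          rw [hieq]
          exact h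
      · have hi1 : 1 ≤ i := by omega
        have him' : i < m := by omega
        have hmn := hmono (i-1) (by omega)
        have hidx : i - 1 + 1 = i := by omega
        rw [hidx] at hmn
        have hkval : ks.getD (i-1) 0 < s := hks _ (hksmem i hi1 him')
        rcases hmn with ⟨ha, hb⟩ | ⟨ha, hb⟩
        · exact ⟨2 * ks.getD (i-1) 0, by omega, by rw [hkeyC i hi0 him]; omega,
            fun _ _ => ha, fun _ => hb⟩
        · exact ⟨2 * ks.getD (i-1) 0 + 1, by omega, by rw [hkeyC i hi0 him]; omega,
            fun _ _ => ha, fun _ => hb⟩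
  choose efun he1 he2 he3 he4 using hfull
  have hkeyinj : ∀ i j, i ≤ m → j ≤ m → keyfun i = keyfun j → i = j := by
    have hval : ∀ x, x ≤ m → x ≠ 0 → (keyfun x = k1 ∧ m ≤ x) ∨ (keyfun x ∈ ks ∧ ¬ m ≤ x) := by
      intro x hx hx0
      by_cases hxm : m ≤ x
      · exact Or.inl ⟨hkeyB x hx0 hxm, hxm⟩
      · exact Or.inr ⟨by rw [hkeyC x hx0 hxm]; exact hksmem x (by omega) (by omega), hxm⟩
    intro i j hi hj heq
    by_cases hi0 : i = 0 <;> by_cases hj0 : j = 0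
    · omega
    · exfalso
      rw [hi0, hkeyA] at heq
      rcases hval j hj hj0 with ⟨h, _⟩ | ⟨h, _⟩
      · exact hk01 (heq.trans h)
      · exact hk0ks (heq ▸ h)
    · exfalso
      rw [hj0, hkeyA] at heq
      rcases hval i hi hi0 with ⟨h, _⟩ | ⟨h, _⟩
      · exact hk01 (heq.symm.trans h)
      · exact hk0ks (heq ▸ h)
    · rcases hval i hi hi0 with ⟨h1, hm1'⟩ | ⟨h1, hm1'⟩ <;>
        rcases hval j hj hj0 with ⟨h2, hm2'⟩ | ⟨h2, hm2'⟩
      · omega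
      · exfalso
        rw [h1] at heq
        exact hk1ks (heq ▸ h2)
      · exfalso
        rw [h2] at heq
        exact hk1ks (heq.symm ▸ h1)
      · have e1 : keyfun i = ks.getD (i-1) 0 := hkeyC i hi0 hm1'
        have e2 : keyfun j = ks.getD (j-1) 0 := hkeyC j hj0 hm2'
        rw [e1, e2] at heq
        rw [List.getD_eq_getElem _ _ (by omega : i - 1 < ks.length),
          List.getD_eq_getElem _ _ (by omega : j - 1 < ks.length)] at heq
        have := (hknd.getElem_inj_iff).mp heq
        omega
  have hefuninj : ∀ i j, i ≤ m → j ≤ m → efun i = efun j → i = j := by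
    intro i j hi hj he
    exact hkeyinj i j hi hj (by rw [← he2, ← he2, he])
  have hadj1 : ∀ i < m, Gᶜ.Adj (P.getVert (efun i)) (wfun i) := fun i hi => he4 i hi
  have hadj2 : ∀ i < m, Gᶜ.Adj (wfun i) (P.getVert (efun (i+1))) := by
    intro i hi
    have h := (he3 (i+1) (by omega) (by omega)).symm
    simpa using h
  obtain ⟨p, hperm⟩ := assemble Gᶜ m (fun i => P.getVert (efun i)) wfun hadj1 hadj2
  have hN1 : ((List.range (m+1)).map (fun i => P.getVert (efun i))).Nodup := by
    refine List.Nodup.map_on ?_ List.nodup_range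
    intro x hx y hy hxy
    have hx' : x ≤ m := by have := List.mem_range.mp hx; omega
    have hy' : y ≤ m := by have := List.mem_range.mp hy; omega
    exact hefuninj x y hx' hy'
      (getVert_injOn' hP (he1 x) (he1 y) hxy)
  have hN2 : ((List.range m).map wfun).Nodup := by
    refine List.Nodup.map_on ?_ List.nodup_range
    intro x hx y hy hxy
    have hx' : x < m := List.mem_range.mp hx
    have hy' : y < m := List.mem_range.mp hy
    rw [hwfundef] at hxy
    simp only at hxy
    rw [List.getD_eq_getElem _ _ (by omega : x < ws.length),
      List.getD_eq_getElem _ _ (by omega : y < ws.length)] at hxy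
    exact (hwnd.getElem_inj_iff).mp hxy
  have hdisj : ((List.range (m+1)).map (fun i => P.getVert (efun i))).Disjoint
      ((List.range m).map wfun) := by
    intro a ha hb
    obtain ⟨x, hx, rfl⟩ := List.mem_map.mp ha
    obtain ⟨y, hy, hyw⟩ := List.mem_map.mp hb
    have hmem1 : P.getVert (efun x) ∈ P.support := hgvmem _ (he1 x)
    have hmem2 : wfun y ∈ S := hwfunS y (List.mem_range.mp hy)
    exact hSoff _ hmem2 (hyw ▸ hmem1)
  have hLnd := hN1.append hN2 hdisj
  have hpath : p.IsPath := (Walk.isPath_def _).mpr (hperm.nodup_iff.mpr hLnd)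
  refine ⟨_, _, p, hpath, ?_⟩
  rw [hperm.length_eq]
  simp only [List.length_append, List.length_map, List.length_range]
  omega
end

section
/- Let t ≥ s ≥ 2 be integers with t ≥ 5s − 1, and let G be a graph on s + t vertices with distinct vertices u and v such that G contains a path on t vertices joining u and v but G contains no path on t + 1 vertices joining u and v. Then the complement of G contains a path on 2s + 1 vertices. -/
open SimpleGraph

section helpers
variable {α : Type*}

lemma exists_walk_of_chain (H : SimpleGraph α) :
    ∀ (l : List α) (a b : α), List.Chain' H.Adj (a :: l) →
      (a :: l).getLast (List.cons_ne_nil a l) = b →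
      ∃ w : H.Walk a b, w.support = a :: l := by
  intro l
  induction l with
  | nil =>
      intro a b _ hb
      simp only [List.getLast_singleton] at hb
      subst hb
      exact ⟨Walk.nil, rfl⟩
  | cons c l ih =>
      intro a b hch hb
      rw [show List.Chain' _ _ = List.IsChain _ _ from rfl, List.isChain_cons_cons] at hch
      obtain ⟨w, hw⟩ := ih c b hch.2
        (by rw [← hb]; exact (List.getLast_cons (List.cons_ne_nil c l)).symm)
      exact ⟨Walk.cons hch.1 w, by simp [hw]⟩

lemma greedy_s16 {β : Type*} [DecidableEq β] :
    ∀ (n : ℕ) (pool : Fin n → Finset β), (∀ i, n ≤ (pool i).card) →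
      ∃ g : Fin n → β, Function.Injective g ∧ ∀ i, g i ∈ pool i
  | 0, pool, _ => ⟨fun i => i.elim0, fun i => i.elim0, fun i => i.elim0⟩
  | (n+1), pool, h => by
      have h0 : (pool 0).Nonempty := Finset.card_pos.mp (by have := h 0; omega)
      obtain ⟨x, hx⟩ := h0
      obtain ⟨g, hg, hgm⟩ := greedy_s16 n (fun i => (pool i.succ).erase x) (by
        intro i
        have h2 := h i.succ
        by_cases hmem : x ∈ pool i.succ
        · rw [Finset.card_erase_of_mem hmem]; omega
        · rw [Finset.erase_eq_of_notMem hmem]; omega)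
      refine ⟨Fin.cases x g, ?_, ?_⟩
      · intro i j hij
        induction i using Fin.cases with
        | zero =>
            induction j using Fin.cases with
            | zero => rfl
            | succ j =>
                exfalso
                have := hgm j
                simp only [Fin.cases_zero, Fin.cases_succ] at hij
                rw [← hij] at this
                exact Finset.notMem_erase x _ this
        | succ i =>
            induction j using Fin.cases with
            | zero =>
                exfalso
                have := hgm i
                simp only [Fin.cases_zero, Fin.cases_succ] at hij
                rw [hij] at this
                exact Finset.notMem_erase x _ this
            | succ j =>
                simp only [Fin.cases_succ] at hij
                rw [hg hij]
      · intro i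
        induction i using Fin.cases with
        | zero => simpa using hx
        | succ i => simpa using Finset.mem_of_mem_erase (hgm i)


lemma key_list (G : SimpleGraph α) (t : ℕ) (lv : ℕ → α) (r : α)
    (hadj : ∀ k, k + 1 < t → G.Adj (lv k) (lv (k + 1)))
    (hinj : ∀ a b, a < t → b < t → lv a = lv b → a = b)
    (hr : ∀ k, k < t → r ≠ lv k)
    (i j : ℕ) (hij : i < j) (hjt : j + 2 ≤ t)
    (h1 : G.Adj r (lv (i + 1))) (h2 : G.Adj r (lv (j + 1)))
    (h3 : G.Adj (lv i) (lv j)) :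
    ∃ M : List α, M.Nodup ∧ M.Chain' G.Adj ∧ M.length = t + 1 ∧
      M.head? = some (lv 0) ∧ M.getLast? = some (lv (t - 1)) := by
  classical
  set f : Fin (t + 1) → α := fun k =>
    if k.val ≤ i then lv k.val
    else if k.val ≤ j then lv (i + j + 1 - k.val)
    else if k.val = j + 1 then r
    else lv (k.val - 1) with hf
  have fval : ∀ (m : ℕ) (hm : m < t + 1), f ⟨m, hm⟩ =
      if m ≤ i then lv m
      else if m ≤ j then lv (i + j + 1 - m)
      else if m = j + 1 then r
      else lv (m - 1) := fun m hm => rfl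
  have hfval : ∀ (k : Fin (t + 1)), (¬ k.val = j + 1) →
      ∃ m, m < t ∧ f k = lv m ∧
        (m = if k.val ≤ i then k.val else if k.val ≤ j then i + j + 1 - k.val
          else k.val - 1) := by
    intro k hk
    obtain ⟨m, hm⟩ := k
    rw [fval]
    by_cases c1 : m ≤ i
    · exact ⟨m, by omega, by rw [if_pos c1], by simp [c1]⟩
    · by_cases c2 : m ≤ j
      · exact ⟨i + j + 1 - m, by omega, by rw [if_neg c1, if_pos c2], by simp [c1, c2]⟩
      · exact ⟨m - 1, by omega, by rw [if_neg c1, if_neg c2, if_neg hk], by simp [c1, c2]⟩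
  have hfr : ∀ (k : Fin (t + 1)), k.val = j + 1 → f k = r := by
    intro k hk
    obtain ⟨m, hm⟩ := k
    rw [fval]
    simp only at hk
    rw [if_neg (by omega), if_neg (by omega), if_pos hk]
  have hfinj : Function.Injective f := by
    intro a b hab
    by_cases ha : a.val = j + 1
    · by_cases hb : b.val = j + 1
      · exact Fin.ext (by omega)
      · obtain ⟨m, hm, hfm, _⟩ := hfval b hb
        rw [hfm, hfr a ha] at hab
        exact absurd hab.symm (hr m hm).symm
    · by_cases hb : b.val = j + 1
      · obtain ⟨m, hm, hfm, _⟩ := hfval a ha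
        rw [hfm, hfr b hb] at hab
        exact absurd hab (hr m hm).symm
      · obtain ⟨m, hm, hfm, hmd⟩ := hfval a ha
        obtain ⟨m', hm', hfm', hmd'⟩ := hfval b hb
        rw [hfm, hfm'] at hab
        have := hinj m m' hm hm' hab
        apply Fin.ext
        split_ifs at hmd hmd' <;> omega
  refine ⟨List.ofFn f, List.nodup_ofFn.mpr hfinj, ?_, by simp, ?_, ?_⟩
  · rw [show List.Chain' _ _ = List.IsChain _ _ from rfl, List.isChain_ofFn]
    intro k hk
    by_cases c1 : k + 1 ≤ i
    · have e1 : f ⟨k, by omega⟩ = lv k := by rw [fval, if_pos (by omega)]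
      have e2 : f ⟨k + 1, hk⟩ = lv (k + 1) := by rw [fval, if_pos c1]
      rw [e1, e2]; exact hadj k (by omega)
    · by_cases c2 : k = i
      · have e1 : f ⟨k, by omega⟩ = lv i := by rw [fval, if_pos (by omega)]; congr 1
        have e2 : f ⟨k + 1, hk⟩ = lv j := by
          rw [fval, if_neg c1, if_pos (by omega)]; congr 1; omega
        rw [e1, e2]; exact h3
      · by_cases c3 : k + 1 ≤ j
        · have e1 : f ⟨k, by omega⟩ = lv (i + j + 1 - k) := by
            rw [fval, if_neg (by omega), if_pos (by omega)]
          have e2 : f ⟨k + 1, hk⟩ = lv (i + j - k) := by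
            rw [fval, if_neg (by omega), if_pos c3]; congr 1; omega
          rw [e1, e2]
          have := hadj (i + j - k) (by omega)
          have heq : i + j - k + 1 = i + j + 1 - k := by omega
          rw [heq] at this
          exact this.symm
        · by_cases c4 : k = j
          · have e1 : f ⟨k, by omega⟩ = lv (i + 1) := by
              rw [fval, if_neg (by omega), if_pos (by omega)]; congr 1; omega
            have e2 : f ⟨k + 1, hk⟩ = r := hfr _ (by show k + 1 = j + 1; omega)
            rw [e1, e2]; exact h1.symm
          · by_cases c5 : k = j + 1
            · have e1 : f ⟨k, by omega⟩ = r := hfr _ (by simp [c5])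
              have e2 : f ⟨k + 1, hk⟩ = lv (j + 1) := by
                rw [fval, if_neg (by omega), if_neg (by omega), if_neg (by omega)]
                congr 1
              rw [e1, e2]; exact h2
            · have e1 : f ⟨k, by omega⟩ = lv (k - 1) := by
                rw [fval, if_neg (by omega), if_neg (by omega), if_neg (by omega)]
              have e2 : f ⟨k + 1, hk⟩ = lv k := by
                rw [fval, if_neg (by omega), if_neg (by omega), if_neg (by omega)]
                congr 1
              rw [e1, e2]
              have := hadj (k - 1) (by omega)
              have heq : k - 1 + 1 = k := by omega
              rw [heq] at this
              exact this
  · have h0 : (List.ofFn f) ≠ [] := by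
      apply List.ne_nil_of_length_pos; simp
    rw [List.head?_eq_head h0, List.head_eq_getElem]
    have : (List.ofFn f)[0]'(by simp) = f ⟨0, by omega⟩ := by
      rw [List.getElem_ofFn]
    rw [this, fval, if_pos (by omega)]
  · have h0 : (List.ofFn f) ≠ [] := by
      apply List.ne_nil_of_length_pos; simp
    rw [List.getLast?_eq_getLast h0, List.getLast_eq_getElem]
    have hlt : (List.ofFn f).length - 1 < (List.ofFn f).length := by simp
    have : (List.ofFn f)[(List.ofFn f).length - 1]'hlt = f ⟨t, by omega⟩ := by
      rw [List.getElem_ofFn]; congr 1; simp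
    rw [this, fval, if_neg (by omega), if_neg (by omega), if_neg (by omega)]


lemma key0_list (G : SimpleGraph α) (t : ℕ) (lv : ℕ → α) (r : α)
    (hadj : ∀ k, k + 1 < t → G.Adj (lv k) (lv (k + 1)))
    (hinj : ∀ a b, a < t → b < t → lv a = lv b → a = b)
    (hr : ∀ k, k < t → r ≠ lv k)
    (ht : 2 ≤ t)
    (h1 : G.Adj r (lv 0)) (h2 : G.Adj r (lv 1)) :
    ∃ M : List α, M.Nodup ∧ M.Chain' G.Adj ∧ M.length = t + 1 ∧
      M.head? = some (lv 0) ∧ M.getLast? = some (lv (t - 1)) := by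
  classical
  set f : Fin (t + 1) → α := fun k =>
    if k.val = 0 then lv 0 else if k.val = 1 then r else lv (k.val - 1) with hf
  have fval : ∀ (m : ℕ) (hm : m < t + 1), f ⟨m, hm⟩ =
      if m = 0 then lv 0 else if m = 1 then r else lv (m - 1) := fun m hm => rfl
  have hfval : ∀ (k : Fin (t + 1)), (¬ k.val = 1) →
      ∃ m, m < t ∧ f k = lv m ∧ (m = if k.val = 0 then 0 else k.val - 1) := by
    intro k hk
    obtain ⟨m, hm⟩ := k
    rw [fval]
    by_cases c1 : m = 0
    · exact ⟨0, by omega, by rw [if_pos c1], by simp [c1]⟩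
    · exact ⟨m - 1, by omega, by rw [if_neg c1, if_neg hk], by simp [c1]⟩
  have hfr : ∀ (k : Fin (t + 1)), k.val = 1 → f k = r := by
    intro k hk
    obtain ⟨m, hm⟩ := k
    rw [fval]
    simp only at hk
    rw [if_neg (by omega), if_pos hk]
  have hfinj : Function.Injective f := by
    intro a b hab
    by_cases ha : a.val = 1
    · by_cases hb : b.val = 1
      · exact Fin.ext (by omega)
      · obtain ⟨m, hm, hfm, _⟩ := hfval b hb
        rw [hfm, hfr a ha] at hab
        exact absurd hab.symm (hr m hm).symm
    · by_cases hb : b.val = 1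
      · obtain ⟨m, hm, hfm, _⟩ := hfval a ha
        rw [hfm, hfr b hb] at hab
        exact absurd hab (hr m hm).symm
      · obtain ⟨m, hm, hfm, hmd⟩ := hfval a ha
        obtain ⟨m', hm', hfm', hmd'⟩ := hfval b hb
        rw [hfm, hfm'] at hab
        have := hinj m m' hm hm' hab
        apply Fin.ext
        split_ifs at hmd hmd' <;> omega
  refine ⟨List.ofFn f, List.nodup_ofFn.mpr hfinj, ?_, by simp, ?_, ?_⟩
  · rw [show List.Chain' _ _ = List.IsChain _ _ from rfl, List.isChain_ofFn]
    intro k hk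
    by_cases c1 : k = 0
    · have e1 : f ⟨k, by omega⟩ = lv 0 := by rw [fval, if_pos c1]
      have e2 : f ⟨k + 1, hk⟩ = r := hfr _ (by show k + 1 = 1; omega)
      rw [e1, e2]; exact h1.symm
    · by_cases c2 : k = 1
      · have e1 : f ⟨k, by omega⟩ = r := hfr _ (by show k = 1; omega)
        have e2 : f ⟨k + 1, hk⟩ = lv 1 := by
          rw [fval, if_neg (by omega), if_neg (by omega)]
          congr 1
        rw [e1, e2]; exact h2
      · have e1 : f ⟨k, by omega⟩ = lv (k - 1) := by
          rw [fval, if_neg (by omega), if_neg (by omega)]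
        have e2 : f ⟨k + 1, hk⟩ = lv k := by
          rw [fval, if_neg (by omega), if_neg (by omega)]
          congr 1
        rw [e1, e2]
        have := hadj (k - 1) (by omega)
        have heq : k - 1 + 1 = k := by omega
        rw [heq] at this
        exact this
  · have h0 : (List.ofFn f) ≠ [] := by
      apply List.ne_nil_of_length_pos; simp
    rw [List.head?_eq_head h0, List.head_eq_getElem]
    have : (List.ofFn f)[0]'(by simp) = f ⟨0, by omega⟩ := by
      rw [List.getElem_ofFn]
    rw [this, fval, if_pos rfl]
  · have h0 : (List.ofFn f) ≠ [] := by
      apply List.ne_nil_of_length_pos; simp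
    rw [List.getLast?_eq_getLast h0, List.getLast_eq_getElem]
    have hlt : (List.ofFn f).length - 1 < (List.ofFn f).length := by simp
    have : (List.ofFn f)[(List.ofFn f).length - 1]'hlt = f ⟨t, by omega⟩ := by
      rw [List.getElem_ofFn]; congr 1; simp
    rw [this, fval, if_neg (by omega), if_neg (by omega)]

end helpers

theorem stmt16 {α : Type*} [Fintype α] (s t : ℕ) (hs : 2 ≤ s) (hst : s ≤ t)
    (ht : 5 * s - 1 ≤ t) (G : SimpleGraph α) (hcard : Fintype.card α = s + t)
    (u v : α) (huv : u ≠ v)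
    (P : G.Walk u v) (hP : P.IsPath) (hlen : P.support.length = t)
    (hmax : ¬ ∃ w : G.Walk u v, w.IsPath ∧ w.support.length = t + 1) :
    ∃ (x y : α) (w : Gᶜ.Walk x y), w.IsPath ∧ w.support.length = 2 * s + 1 := by
  classical
  have ht9 : 9 ≤ t := by omega
  have hnd : P.support.Nodup := hP.support_nodup
  have hch : P.support.Chain' G.Adj := P.isChain_adj_support
  set lv : ℕ → α := fun k => P.support.getD k u with hlvdef
  have hlvget : ∀ k, k < t → ∀ (h : k < P.support.length), lv k = P.support[k] := by
    intro k hk h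
    simp only [hlvdef]
    exact List.getD_eq_getElem _ _ h
  have hlv0 : lv 0 = u := by
    have h0 : 0 < P.support.length := by rw [hlen]; omega
    rw [hlvget 0 (by omega) h0, ← List.head_eq_getElem]
    exact P.head_support
  have hlvt : lv (t - 1) = v := by
    have h0 : t - 1 < P.support.length := by rw [hlen]; omega
    rw [hlvget (t-1) (by omega) h0]
    have := P.getLast_support
    rw [List.getLast_eq_getElem] at this
    convert this using 2
    rw [hlen]
  have hmem : ∀ k, k < t → lv k ∈ P.support := by
    intro k hk
    have h0 : k < P.support.length := by rw [hlen]; exact hk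
    rw [hlvget k hk h0]
    exact List.getElem_mem h0
  have hadj : ∀ k, k + 1 < t → G.Adj (lv k) (lv (k + 1)) := by
    intro k hk
    have h1 : k < P.support.length := by rw [hlen]; omega
    have h2 : k + 1 < P.support.length := by rw [hlen]; omega
    rw [hlvget k (by omega) h1, hlvget (k+1) (by omega) h2]
    have := List.isChain_iff_getElem.mp hch k (by rw [hlen]; omega)
    simpa [List.get_eq_getElem] using this
  have hinj : ∀ a b, a < t → b < t → lv a = lv b → a = b := by
    intro a b ha hb h
    have h1 : a < P.support.length := by rw [hlen]; exact ha
    have h2 : b < P.support.length := by rw [hlen]; exact hb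
    rw [hlvget a ha h1, hlvget b hb h2] at h
    exact (List.Nodup.getElem_inj_iff hnd).mp h
  -- contradiction builder
  have contra : ∀ M : List α, M.Nodup → M.Chain' G.Adj → M.length = t + 1 →
      M.head? = some u → M.getLast? = some v → False := by
    rintro (_ | ⟨a, tl⟩) h1 h2 h3 h4 h5
    · simp at h4
    · simp only [List.head?_cons, Option.some.injEq] at h4
      obtain rfl := h4
      rw [List.getLast?_eq_getLast (List.cons_ne_nil _ _), Option.some.injEq] at h5
      obtain ⟨w, hw⟩ := exists_walk_of_chain G tl a v h2 h5
      exact hmax ⟨w, by rw [Walk.isPath_def, hw]; exact h1, by rw [hw]; exact h3⟩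
  have hrne : ∀ r, r ∉ P.support → ∀ k, k < t → r ≠ lv k :=
    fun r hrP k hk he => hrP (he ▸ hmem k hk)
  have key : ∀ r, r ∉ P.support → ∀ i j, i < j → j + 2 ≤ t →
      G.Adj r (lv (i+1)) → G.Adj r (lv (j+1)) → G.Adj (lv i) (lv j) → False := by
    intro r hrP i j hij hjt h1 h2 h3
    obtain ⟨M, m1, m2, m3, m4, m5⟩ :=
      key_list G t lv r hadj hinj (hrne r hrP) i j hij hjt h1 h2 h3
    exact contra M m1 m2 m3 (by rw [m4, hlv0]) (by rw [m5, hlvt])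
  have key0 : ∀ r, r ∉ P.support → G.Adj r (lv 0) → G.Adj r (lv 1) → False := by
    intro r hrP h1 h2
    obtain ⟨M, m1, m2, m3, m4, m5⟩ :=
      key0_list G t lv r hadj hinj (hrne r hrP) (by omega) h1 h2
    exact contra M m1 m2 m3 (by rw [m4, hlv0]) (by rw [m5, hlvt])
  -- finisher
  have finish : ∀ M : List α, M.Nodup → M.Chain' Gᶜ.Adj → M.length = 2*s+1 →
      (∃ (x y : α) (w : Gᶜ.Walk x y), w.IsPath ∧ w.support.length = 2*s+1) := by
    rintro (_ | ⟨a, tl⟩) h1 h2 h3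
    · exfalso; simp at h3
    · obtain ⟨w, hw⟩ := exists_walk_of_chain Gᶜ tl a _ h2 rfl
      exact ⟨a, _, w, by rw [Walk.isPath_def, hw]; exact h1, by rw [hw]; exact h3⟩
  -- the set R of vertices off the path
  set RL : Finset α := Finset.univ \ P.support.toFinset with hRLdef
  have hRLcard : RL.card = s := by
    rw [hRLdef, Finset.card_sdiff_of_subset (Finset.subset_univ _), List.toFinset_card_of_nodup hnd,
      hlen, Finset.card_univ, hcard]
    omega
  have hRLP : ∀ x ∈ RL, x ∉ P.support := by
    intro x hx
    rw [hRLdef, Finset.mem_sdiff] at hx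
    simpa using hx.2
  by_cases hbig : ∃ r ∈ RL, 2*s+1 ≤ ((Finset.range t).filter (fun k => G.Adj r (lv k))).card
  · -- CASE 1 : complement clique
    obtain ⟨r, hrR, hrcard⟩ := hbig
    have hrP : r ∉ P.support := hRLP r hrR
    set N : Finset ℕ := (Finset.range t).filter (fun k => G.Adj r (lv k)) with hNdef
    set D : Finset ℕ := (Finset.range (t-1)).filter (fun k => G.Adj r (lv (k+1))) with hDdef
    have hND : (N.erase 0).card ≤ D.card := by
      apply Finset.card_le_card_of_injOn (fun k => k - 1)
      · intro k hk
        simp only [Finset.mem_coe] at hk ⊢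
        rw [Finset.mem_erase] at hk
        obtain ⟨hk0, hkN⟩ := hk
        rw [hNdef, Finset.mem_filter, Finset.mem_range] at hkN
        rw [hDdef, Finset.mem_filter, Finset.mem_range]
        have hkk : k - 1 + 1 = k := by omega
        refine ⟨by omega, ?_⟩
        rw [hkk]
        exact hkN.2
      · intro a ha b hb hab
        simp only [Finset.coe_erase, Set.mem_diff, Finset.mem_coe] at ha hb
        have ha0 : a ≠ 0 := by simpa using ha.2
        have hb0 : b ≠ 0 := by simpa using hb.2
        have hab' : a - 1 = b - 1 := hab
        omega
    have hDcard : 2*s ≤ D.card := by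
      have h1 : N.card - 1 ≤ (N.erase 0).card := Finset.pred_card_le_card_erase
      omega
    have hDle : ∀ k ∈ D, k < t - 1 ∧ G.Adj r (lv (k+1)) := by
      intro k hk
      rw [hDdef, Finset.mem_filter, Finset.mem_range] at hk
      exact hk
    set T : Finset α := insert r (D.image lv) with hTdef
    have hrim : r ∉ D.image lv := by
      rw [Finset.mem_image]
      rintro ⟨k, hk, hkr⟩
      exact hrne r hrP k (by have := (hDle k hk).1; omega) hkr.symm
    have hTcard : 2*s+1 ≤ T.card := by
      rw [hTdef, Finset.card_insert_of_notMem hrim]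
      have : D.card = (D.image lv).card := by
        rw [Finset.card_image_of_injOn]
        intro a ha b hb hab
        exact hinj a b (by have := (hDle a ha).1; omega) (by have := (hDle b hb).1; omega) hab
      omega
    have hTadj : ∀ x ∈ T, ∀ y ∈ T, x ≠ y → ¬ G.Adj x y := by
      have hpair : ∀ b ∈ D, ¬ G.Adj r (lv b) := by
        intro b hb hadjb
        obtain ⟨hbt, hbadj⟩ := hDle b hb
        rcases Nat.eq_zero_or_pos b with hb0 | hb0
        · subst hb0
          exact key0 r hrP hadjb hbadj
        · apply key r hrP (b-1) b (by omega) (by omega)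
          · have hbb : b - 1 + 1 = b := by omega
            rw [hbb]; exact hadjb
          · exact hbadj
          · have hbb : b - 1 + 1 = b := by omega
            have := hadj (b-1) (by omega)
            rw [hbb] at this
            exact this
      have hDD : ∀ a ∈ D, ∀ b ∈ D, a < b → ¬ G.Adj (lv a) (lv b) := by
        intro a ha b hb hab hadjab
        exact key r hrP a b hab (by have := (hDle b hb).1; omega)
          (hDle a ha).2 (hDle b hb).2 hadjab
      intro x hx y hy hxy hadjxy
      rw [hTdef, Finset.mem_insert] at hx hy
      rcases hx with rfl | hx
      · rcases hy with rfl | hy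
        · exact hxy rfl
        · obtain ⟨b, hb, rfl⟩ := Finset.mem_image.mp hy
          exact hpair b hb hadjxy
      · obtain ⟨a, ha, rfl⟩ := Finset.mem_image.mp hx
        rcases hy with rfl | hy
        · exact hpair a ha hadjxy.symm
        · obtain ⟨b, hb, rfl⟩ := Finset.mem_image.mp hy
          have hab : a ≠ b := by
            intro h; exact hxy (h ▸ rfl)
          rcases Nat.lt_or_ge a b with h | h
          · exact hDD a ha b hb h hadjxy
          · exact hDD b hb a ha (by omega) hadjxy.symm
    -- build the path from the clique
    have hlen2 : 2*s+1 ≤ T.toList.length := by rw [Finset.length_toList]; exact hTcard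
    set f : Fin (2*s+1) → α := fun k => T.toList.get ⟨k.val, by omega⟩ with hfdef
    have hfmem : ∀ k, f k ∈ T := by
      intro k
      rw [hfdef]
      exact Finset.mem_toList.mp (List.get_mem _ _)
    have hfinj : Function.Injective f := by
      intro a b hab
      rw [hfdef] at hab
      have := (List.Nodup.get_inj_iff (Finset.nodup_toList T)).mp hab
      exact Fin.ext (by simpa using this)
    apply finish (List.ofFn f) (List.nodup_ofFn.mpr hfinj) ?_ (by simp)
    rw [show List.Chain' _ _ = List.IsChain _ _ from rfl, List.isChain_ofFn]
    intro k hk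
    have hne : f ⟨k, by omega⟩ ≠ f ⟨k+1, hk⟩ := by
      intro h
      have := hfinj h
      simp only [Fin.mk.injEq] at this
      omega
    rw [SimpleGraph.compl_adj]
    exact ⟨hne, hTadj _ (hfmem _) _ (hfmem _) hne⟩
  · -- CASE 2 : alternating complement path
    push_neg at hbig
    set nonN : α → Finset ℕ := fun x => (Finset.range t).filter (fun k => ¬ G.Adj x (lv k))
      with hnonNdef
    have hnonN : ∀ x ∈ RL, t - 2*s ≤ (nonN x).card := by
      intro x hx
      have h1 := Finset.card_filter_add_card_filter_not
        (s := Finset.range t) (p := fun k => G.Adj x (lv k))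
      have h2 := hbig x hx
      rw [Finset.card_range] at h1
      rw [hnonNdef]
      simp only []
      omega
    have hnonNsub : ∀ x, nonN x ⊆ Finset.range t := fun x => Finset.filter_subset _ _
    have hnonNadj : ∀ x, ∀ k ∈ nonN x, ¬ G.Adj x (lv k) := by
      intro x k hk
      rw [hnonNdef] at hk
      exact (Finset.mem_filter.mp hk).2
    -- the list of off-path vertices
    set rv : ℕ → α := fun i => RL.toList.getD i u with hrvdef
    have hrllen : RL.toList.length = s := by rw [Finset.length_toList, hRLcard]
    have hrvget : ∀ i, i < s → ∀ (h : i < RL.toList.length), rv i = RL.toList[i] := by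
      intro i hi h
      rw [hrvdef]
      exact List.getD_eq_getElem _ _ h
    have hrvmem : ∀ i, i < s → rv i ∈ RL := by
      intro i hi
      have h : i < RL.toList.length := by rw [hrllen]; exact hi
      rw [hrvget i hi h]
      exact Finset.mem_toList.mp (List.getElem_mem h)
    have hrvinj : ∀ a b, a < s → b < s → rv a = rv b → a = b := by
      intro a b ha hb h
      have h1 : a < RL.toList.length := by rw [hrllen]; exact ha
      have h2 : b < RL.toList.length := by rw [hrllen]; exact hb
      rw [hrvget a ha h1, hrvget b hb h2] at h
      exact (List.Nodup.getElem_inj_iff (Finset.nodup_toList RL)).mp h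
    have hrvP : ∀ i, i < s → rv i ∉ P.support := fun i hi => hRLP _ (hrvmem i hi)
    -- greedy choice of the middle connectors
    set pool : Fin (s-1) → Finset ℕ :=
      fun k => nonN (rv k.val) ∩ nonN (rv (k.val+1)) with hpooldef
    have hpool : ∀ k, s-1 ≤ (pool k).card := by
      intro k
      have hk1 : (k : ℕ) < s := by omega
      have hk2 : (k : ℕ) + 1 < s := by omega
      have h1 := hnonN _ (hrvmem k.val (by omega))
      have h2 := hnonN _ (hrvmem (k.val+1) (by omega))
      have h3 := Finset.card_union_add_card_inter (nonN (rv k.val)) (nonN (rv (k.val+1)))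
      have h4 : (nonN (rv k.val) ∪ nonN (rv (k.val+1))).card ≤ t := by
        calc (nonN (rv k.val) ∪ nonN (rv (k.val+1))).card
            ≤ (Finset.range t).card :=
              Finset.card_le_card (Finset.union_subset (hnonNsub _) (hnonNsub _))
          _ = t := Finset.card_range t
      rw [hpooldef]
      simp only []
      omega
    obtain ⟨g, hginj, hgmem⟩ := greedy_s16 (s-1) pool hpool
    -- choose the two end connectors
    have hq0ex : (nonN (rv 0) \ (Finset.univ.image (fun k : Fin (s-1) => g k))).Nonempty := by
      apply Finset.card_pos.mp
      have h1 := Finset.le_card_sdiff (Finset.univ.image (fun k : Fin (s-1) => g k)) (nonN (rv 0))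
      have h2 : (Finset.univ.image (fun k : Fin (s-1) => g k)).card ≤ s - 1 := by
        calc (Finset.univ.image (fun k : Fin (s-1) => g k)).card
            ≤ (Finset.univ : Finset (Fin (s-1))).card := Finset.card_image_le
          _ = s - 1 := by simp
      have h3 := hnonN _ (hrvmem 0 (by omega))
      omega
    obtain ⟨q0, hq0⟩ := hq0ex
    rw [Finset.mem_sdiff] at hq0
    have hqsex : (nonN (rv (s-1)) \ (insert q0 (Finset.univ.image (fun k : Fin (s-1) => g k)))).Nonempty := by
      apply Finset.card_pos.mp
      have h1 := Finset.le_card_sdiff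
        (insert q0 (Finset.univ.image (fun k : Fin (s-1) => g k))) (nonN (rv (s-1)))
      have h2 : (insert q0 (Finset.univ.image (fun k : Fin (s-1) => g k))).card ≤ s := by
        calc (insert q0 (Finset.univ.image (fun k : Fin (s-1) => g k))).card
            ≤ (Finset.univ.image (fun k : Fin (s-1) => g k)).card + 1 :=
              Finset.card_insert_le _ _
          _ ≤ s := by
              have : (Finset.univ.image (fun k : Fin (s-1) => g k)).card ≤ s - 1 := by
                calc (Finset.univ.image (fun k : Fin (s-1) => g k)).card
                    ≤ (Finset.univ : Finset (Fin (s-1))).card := Finset.card_image_le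
                  _ = s - 1 := by simp
              omega
      have h3 := hnonN _ (hrvmem (s-1) (by omega))
      omega
    obtain ⟨qs, hqs⟩ := hqsex
    rw [Finset.mem_sdiff, Finset.mem_insert] at hqs
    push_neg at hqs
    -- the connector function
    set Q : ℕ → ℕ := fun j =>
      if h0 : j = 0 then q0 else if h1 : j ≤ s-1 then g ⟨j-1, by omega⟩ else qs with hQdef
    have hQ0 : Q 0 = q0 := by rw [hQdef]; simp
    have hQmid : ∀ j, 1 ≤ j → j ≤ s-1 → ∀ (hj : j - 1 < s - 1), Q j = g ⟨j-1, hj⟩ := by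
      intro j hj1 hj2 hj
      rw [hQdef]
      simp only []
      rw [dif_neg (by omega), dif_pos hj2]
    have hQs : Q s = qs := by
      rw [hQdef]
      simp only []
      rw [dif_neg (by omega), dif_neg (by omega)]
    have hgpool : ∀ (k : Fin (s-1)), g k ∈ nonN (rv k.val) ∧ g k ∈ nonN (rv (k.val+1)) := by
      intro k
      have := hgmem k
      rw [hpooldef] at this
      exact Finset.mem_inter.mp this
    have hQmem : ∀ j, j ≤ s → Q j ∈ Finset.range t := by
      intro j hj
      rcases Nat.eq_zero_or_pos j with rfl | hj1
      · rw [hQ0]; exact hnonNsub _ hq0.1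
      · rcases Nat.lt_or_ge j s with hj2 | hj2
        · have hj3 : j ≤ s - 1 := by omega
          rw [hQmid j hj1 hj3 (by omega)]
          exact hnonNsub _ (hgpool ⟨j-1, by omega⟩).1
        · have : j = s := by omega
          subst this
          rw [hQs]
          exact hnonNsub _ hqs.1
    have hQlt : ∀ j, j ≤ s → Q j < t := by
      intro j hj
      have := hQmem j hj
      rwa [Finset.mem_range] at this
    have hQnonA : ∀ j, j ≤ s-1 → ¬ G.Adj (rv j) (lv (Q j)) := by
      intro j hj
      rcases Nat.eq_zero_or_pos j with rfl | hj1
      · rw [hQ0]; exact hnonNadj _ _ hq0.1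
      · rw [hQmid j hj1 hj (by omega)]
        have h := (hgpool ⟨j-1, by omega⟩).2
        have hjj : j - 1 + 1 = j := by omega
        rw [hjj] at h
        exact hnonNadj _ _ h
    have hQnonB : ∀ j, 1 ≤ j → j ≤ s → ¬ G.Adj (rv (j-1)) (lv (Q j)) := by
      intro j hj1 hj2
      rcases Nat.lt_or_ge j s with hj3 | hj3
      · have hj4 : j ≤ s - 1 := by omega
        rw [hQmid j hj1 hj4 (by omega)]
        exact hnonNadj _ _ (hgpool ⟨j-1, by omega⟩).1
      · have : j = s := by omega
        subst this
        rw [hQs]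
        exact hnonNadj _ _ hqs.1
    have hgne : ∀ (kk : Fin (s-1)), q0 ≠ g kk := by
      intro kk h
      exact hq0.2 (Finset.mem_image.mpr ⟨kk, Finset.mem_univ _, h.symm⟩)
    have hgne2 : ∀ (kk : Fin (s-1)), qs ≠ g kk := by
      intro kk h
      exact hqs.2.2 (Finset.mem_image.mpr ⟨kk, Finset.mem_univ _, h.symm⟩)
    have hQinj : ∀ a b, a ≤ s → b ≤ s → Q a = Q b → a = b := by
      have hQcase : ∀ j, j ≤ s → (j = 0 ∧ Q j = q0) ∨
          (1 ≤ j ∧ j ≤ s-1 ∧ ∃ (hj : j - 1 < s-1), Q j = g ⟨j-1, hj⟩) ∨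
          (j = s ∧ Q j = qs) := by
        intro j hj
        rcases Nat.eq_zero_or_pos j with rfl | hj1
        · exact Or.inl ⟨rfl, hQ0⟩
        · rcases Nat.lt_or_ge j s with hj2 | hj2
          · exact Or.inr (Or.inl ⟨hj1, by omega, by omega, hQmid j hj1 (by omega) (by omega)⟩)
          · have : j = s := by omega
            subst this
            exact Or.inr (Or.inr ⟨rfl, hQs⟩)
      intro a b ha hb hab
      rcases hQcase a ha with ⟨ha0, hae⟩ | ⟨ha1, ha2, hja, hae⟩ | ⟨ha0, hae⟩ <;>
        rcases hQcase b hb with ⟨hb0, hbe⟩ | ⟨hb1, hb2, hjb, hbe⟩ | ⟨hb0, hbe⟩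
      · omega
      · exfalso; rw [hae, hbe] at hab; exact hgne _ hab
      · exfalso
        rw [hae, hbe] at hab
        exact hqs.2.1 hab.symm
      · exfalso; rw [hae, hbe] at hab; exact hgne _ hab.symm
      · rw [hae, hbe] at hab
        have := hginj hab
        have := Fin.mk.injEq (a-1) hja (b-1) hjb ▸ this
        omega
      · exfalso; rw [hae, hbe] at hab; exact hgne2 _ hab.symm
      · exfalso
        rw [hae, hbe] at hab
        exact hqs.2.1 hab
      · exfalso; rw [hae, hbe] at hab; exact hgne2 _ hab
      · omega
    -- the alternating function
    set f : Fin (2*s+1) → α := fun k =>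
      if k.val % 2 = 0 then lv (Q (k.val/2)) else rv (k.val/2) with hfdef
    have hfval : ∀ (m : ℕ) (hm : m < 2*s+1), f ⟨m, hm⟩ =
        if m % 2 = 0 then lv (Q (m/2)) else rv (m/2) := fun m hm => rfl
    have hfinj : Function.Injective f := by
      intro a b hab
      obtain ⟨a, ha⟩ := a
      obtain ⟨b, hb⟩ := b
      rw [hfval, hfval] at hab
      apply Fin.ext
      simp only []
      by_cases pa : a % 2 = 0 <;> by_cases pb : b % 2 = 0
      · rw [if_pos pa, if_pos pb] at hab
        have h1 := hinj _ _ (hQlt (a/2) (by omega)) (hQlt (b/2) (by omega)) hab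
        have h2 := hQinj (a/2) (b/2) (by omega) (by omega) h1
        omega
      · rw [if_pos pa, if_neg pb] at hab
        exfalso
        exact hrvP (b/2) (by omega) (hab ▸ hmem _ (hQlt (a/2) (by omega)))
      · rw [if_neg pa, if_pos pb] at hab
        exfalso
        exact hrvP (a/2) (by omega) (hab.symm ▸ hmem _ (hQlt (b/2) (by omega)))
      · rw [if_neg pa, if_neg pb] at hab
        have := hrvinj _ _ (by omega) (by omega) hab
        omega
    apply finish (List.ofFn f) (List.nodup_ofFn.mpr hfinj) ?_ (by simp)
    rw [show List.Chain' _ _ = List.IsChain _ _ from rfl, List.isChain_ofFn]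
    intro k hk
    rw [SimpleGraph.compl_adj]
    constructor
    · intro h
      have := hfinj h
      simp only [Fin.mk.injEq] at this
      omega
    · by_cases pk : k % 2 = 0
      · have e1 : f ⟨k, by omega⟩ = lv (Q (k/2)) := by rw [hfval, if_pos pk]
        have e2 : f ⟨k+1, hk⟩ = rv ((k+1)/2) := by
          rw [hfval, if_neg (by omega)]
        have h2 : (k+1)/2 = k/2 := by omega
        rw [e1, e2, h2]
        intro h
        exact hQnonA (k/2) (by omega) h.symm
      · have e1 : f ⟨k, by omega⟩ = rv (k/2) := by rw [hfval, if_neg pk]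
        have e2 : f ⟨k+1, hk⟩ = lv (Q ((k+1)/2)) := by
          rw [hfval, if_pos (by omega)]
        rw [e1, e2]
        intro h
        have h3 : (k+1)/2 - 1 = k/2 := by omega
        have := hQnonB ((k+1)/2) (by omega) (by omega)
        rw [h3] at this
        exact this h
end

section
/- Let t ≥ s ≥ 2 be integers with t ≥ 5s − 1, and let G be a graph on s + t vertices with distinct vertices u and v such that G contains a path P on t vertices joining u and v but G contains no path on t + 1 vertices joining u and v. Then either for every pair of distinct vertices x, y of G not on P the complement of G contains a path on 2s − 1 vertices joining x and y, or the complement of G contains a complete graph on 2s + 1 vertices. -/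
open SimpleGraph

namespace Stmt17Aux

variable {α : Type*}

def mkWalk (G : SimpleGraph α) : (l : List α) → l.Chain' G.Adj → (hne : l ≠ []) → G.Walk (l.head hne) (l.getLast hne)
  | [_], _, _ => SimpleGraph.Walk.nil
  | a :: b :: rest, hc, _ =>
      (SimpleGraph.Walk.cons (show G.Adj a ((b :: rest).head (List.cons_ne_nil _ _)) from (List.isChain_cons_cons.mp hc).1)
        (mkWalk G (b :: rest) (show (b :: rest).Chain' G.Adj from (List.isChain_cons_cons.mp hc).2) (List.cons_ne_nil _ _))).copy List.head_cons.symm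
        (List.getLast_cons (List.cons_ne_nil _ _)).symm

lemma mkWalk_support (G : SimpleGraph α) : ∀ (l : List α) (hc : l.Chain' G.Adj) (hne : l ≠ []),
    (mkWalk G l hc hne).support = l
  | [_], _, _ => rfl
  | a :: b :: rest, hc, _ => by
      rw [mkWalk]
      rw [SimpleGraph.Walk.support_copy, SimpleGraph.Walk.support_cons,
        mkWalk_support G (b :: rest) (List.isChain_cons_cons.mp hc).2 (by simp)]

lemma chainBuild {α : Type*} [DecidableEq α] (G : SimpleGraph α) (Pfin Rset : Finset α) (s : ℕ)
    (Cfun : α → α → Finset α)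
    (hdisj : ∀ a ∈ Rset, a ∉ Pfin)
    (hCsub : ∀ r r', ∀ p ∈ Cfun r r', p ∈ Pfin ∧ ¬ G.Adj r p ∧ ¬ G.Adj r' p)
    (hstar : ∀ r ∈ Rset, ∀ r' ∈ Rset, r ≠ r' → s - 1 ≤ (Cfun r r').card) :
    ∀ (rs : List α) (hne : rs ≠ []) (used : Finset α), rs.Nodup → (∀ a ∈ rs, a ∈ Rset) →
      used ⊆ Pfin → used.card + rs.length ≤ s →
      ∃ W : Gᶜ.Walk (rs.head hne) (rs.getLast hne), W.IsPath ∧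
        W.support.length = 2 * rs.length - 1 ∧
        ∀ z ∈ W.support, z ∈ rs ∨ (z ∈ Pfin ∧ z ∉ used)
  | [r], _, used, _, _, _, _ => by
      refine ⟨SimpleGraph.Walk.nil, by simp, by simp, ?_⟩
      intro z hz
      simp at hz
      subst hz
      exact Or.inl (by simp [List.getLast])
  | r :: r' :: rest, _, used, hnd, hmemR, husedP, hcard => by
      have hrR : r ∈ Rset := hmemR r (by simp)
      have hr'R : r' ∈ Rset := hmemR r' (by simp)
      have hrr' : r ≠ r' := by
        intro h; subst h; simp at hnd
      have hCcard : s - 1 ≤ (Cfun r r').card := hstar r hrR r' hr'R hrr'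
      have husedlt : used.card < s - 1 := by
        simp only [List.length_cons] at hcard
        omega
      have hne2 : (Cfun r r' \ used).Nonempty := by
        rw [← Finset.card_pos]
        have := Finset.le_card_sdiff used (Cfun r r')
        omega
      obtain ⟨q, hq⟩ := hne2
      rw [Finset.mem_sdiff] at hq
      obtain ⟨hqC, hqused⟩ := hq
      obtain ⟨hqP, hqr, hqr'⟩ := hCsub r r' q hqC
      have hqnotR : ∀ a ∈ Rset, a ≠ q := fun a ha h => hdisj a ha (h ▸ hqP)
      obtain ⟨W', hW'path, hW'len, hW'mem⟩ := chainBuild G Pfin Rset s Cfun hdisj hCsub hstar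
        (r' :: rest)
        (List.cons_ne_nil _ _) (insert q used) hnd.of_cons (fun a ha => hmemR a (List.mem_cons_of_mem _ ha))
        (Finset.insert_subset hqP husedP)
        (by rw [Finset.card_insert_of_notMem hqused]; simp only [List.length_cons] at hcard ⊢; omega)
      have hadj1 : Gᶜ.Adj r q := by
        rw [SimpleGraph.compl_adj]
        exact ⟨fun h => hqnotR r hrR h, hqr⟩
      have hadj2 : Gᶜ.Adj q ((r' :: rest).head (List.cons_ne_nil _ _)) := by
        rw [SimpleGraph.compl_adj]
        exact ⟨fun h => hqnotR r' hr'R h.symm, fun h => hqr' h.symm⟩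
      have hglast : (r :: r' :: rest).getLast (List.cons_ne_nil _ _) = (r' :: rest).getLast (List.cons_ne_nil _ _) :=
        List.getLast_cons (List.cons_ne_nil _ _)
      refine ⟨(SimpleGraph.Walk.cons hadj1 (SimpleGraph.Walk.cons hadj2 W')).copy List.head_cons.symm hglast.symm, ?_, ?_, ?_⟩
      · rw [SimpleGraph.Walk.isPath_def, SimpleGraph.Walk.support_copy,
          SimpleGraph.Walk.support_cons, SimpleGraph.Walk.support_cons]
        have hqW' : q ∉ W'.support := by
          intro hmem
          rcases hW'mem q hmem with h | h
          · exact hqnotR q (hmemR q (List.mem_cons_of_mem _ h)) rfl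
          · exact h.2 (Finset.mem_insert_self _ _)
        have hrW' : r ∉ W'.support := by
          intro hmem
          rcases hW'mem r hmem with h | h
          · exact (List.nodup_cons.mp hnd).1 h
          · exact hdisj r hrR h.1
        refine List.nodup_cons.mpr ⟨?_, List.nodup_cons.mpr ⟨hqW', hW'path.support_nodup⟩⟩
        simp only [List.mem_cons]
        rintro (h | h)
        · exact hqnotR r hrR h
        · exact hrW' h
      · rw [SimpleGraph.Walk.support_copy, SimpleGraph.Walk.support_cons,
          SimpleGraph.Walk.support_cons, List.length_cons, List.length_cons, hW'len]
        simp only [List.length_cons]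
        omega
      · intro z hz
        rw [SimpleGraph.Walk.support_copy, SimpleGraph.Walk.support_cons,
          SimpleGraph.Walk.support_cons] at hz
        simp only [List.mem_cons] at hz
        rcases hz with h | h | h
        · exact Or.inl (by simp [h])
        · subst h; exact Or.inr ⟨hqP, hqused⟩
        · rcases hW'mem z h with h' | h'
          · exact Or.inl (List.mem_cons_of_mem _ h')
          · exact Or.inr ⟨h'.1, fun hz' => h'.2 (Finset.mem_insert_of_mem hz')⟩

end Stmt17Aux

theorem stmt17 {α : Type*} [Fintype α] (s t : ℕ) (hs : 2 ≤ s) (hst : s ≤ t)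
    (ht : 5 * s - 1 ≤ t) (G : SimpleGraph α) (hcard : Fintype.card α = s + t)
    (u v : α) (huv : u ≠ v)
    (P : G.Walk u v) (hP : P.IsPath) (hlen : P.support.length = t)
    (hmax : ¬ ∃ w : G.Walk u v, w.IsPath ∧ w.support.length = t + 1) :
    (∀ x y : α, x ∉ P.support → y ∉ P.support → x ≠ y →
      ∃ w : Gᶜ.Walk x y, w.IsPath ∧ w.support.length = 2 * s - 1) ∨
    (∃ c : Finset α, Gᶜ.IsNClique (2 * s + 1) c) := by
  classical
  set L := P.support with hLdef
  have Lnd : L.Nodup := hP.support_nodup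
  have Lch : L.Chain' G.Adj := P.isChain_adj_support
  have Lne : L ≠ [] := P.support_ne_nil
  have Llen : L.length = t := hlen
  have ht9 : 9 ≤ t := by omega
  have hLhead : ∀ (h : L ≠ []), L.head h = u := fun h => P.head_support
  have hLlast : ∀ (h : L ≠ []), L.getLast h = v := fun h => P.getLast_support
  have hLlast? : L.getLast? = some v := by
    rw [List.getLast?_eq_getLast Lne, hLlast Lne]
  have hLhead? : L.head? = some u := by
    rw [List.head?_eq_head Lne, hLhead Lne]
  have hdropne : ∀ {k}, k < L.length → L.drop k ≠ [] := by
    intro k hk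
    rw [← List.length_pos_iff]
    rw [List.length_drop]
    omega
  have hdropLast : ∀ (k) (h : L.drop k ≠ []), (L.drop k).getLast h = v := by
    intro k h
    have e1 := hLlast?
    rw [← List.take_append_drop k L, List.getLast?_append, List.getLast?_eq_getLast h] at e1
    simp only [Option.or_some, Option.some.injEq, Option.or] at e1
    exact e1
  have htakene : ∀ {k}, 0 < k → L.take k ≠ [] := by
    intro k hk
    rw [← List.length_pos_iff, List.length_take]
    have := List.length_pos_iff.mpr Lne
    omega
  have htakeHead : ∀ (k) (h : L.take k ≠ []), (L.take k).head h = u := by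
    intro k h
    have e1 := hLhead?
    rw [← List.take_append_drop k L, List.head?_append, List.head?_eq_head h] at e1
    simp only [Option.or_some, Option.some.injEq, Option.or] at e1
    exact e1
  have htakeLast : ∀ (i : ℕ) (hi : i < L.length) (h : L.take (i+1) ≠ []),
      (L.take (i+1)).getLast h = L[i] := by
    intro i hi h
    have hlt : (L.take (i+1)).length = i + 1 := by
      rw [List.length_take]; omega
    rw [List.getLast_eq_getElem]
    have : (L.take (i+1))[(L.take (i+1)).length - 1]'(by omega) =
        (L.take (i+1))[i]'(by omega) := by
      congr 1
      omega
    rw [this, List.getElem_take]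
  -- Rotation A: no vertex off the path is adjacent to two consecutive path vertices
  have rotA : ∀ w, w ∉ L → ∀ (i : ℕ) (hi : i + 1 < L.length),
      G.Adj w (L[i]'(by omega)) → G.Adj w (L[i+1]'hi) → False := by
    intro w hw i hi h1 h2
    apply hmax
    have hiL : i < L.length := by omega
    have hAne : L.take (i+1) ≠ [] := htakene (by omega)
    have hBne : L.drop (i+1) ≠ [] := hdropne hi
    have hBcons : L.drop (i+1) = L[i+1] :: L.drop (i+2) := List.drop_eq_getElem_cons hi
    have hchain : (L.take (i+1) ++ w :: L.drop (i+1)).Chain' G.Adj := by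
      have hc := Lch
      rw [show L = L.take (i+1) ++ L.drop (i+1) from (List.take_append_drop _ L).symm] at hc
      obtain ⟨cA, cB, _⟩ := List.isChain_append.mp hc
      refine List.isChain_append.mpr ⟨cA, List.isChain_cons.mpr ⟨?_, cB⟩, ?_⟩
      · intro z hz
        rw [hBcons] at hz
        simp only [List.head?_cons, Option.mem_def, Option.some.injEq] at hz
        subst hz
        exact h2
      · intro a ha b hb
        simp only [List.head?_cons, Option.mem_def, Option.some.injEq] at hb
        subst hb
        rw [List.getLast?_eq_getLast hAne, Option.mem_def, Option.some.injEq] at ha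
        subst ha
        rw [htakeLast i hiL hAne]
        exact h1.symm
    have hperm : List.Perm (L.take (i+1) ++ w :: L.drop (i+1)) (w :: L) := by
      refine List.Perm.trans List.perm_middle ?_
      rw [List.take_append_drop]
    have hnodup : (L.take (i+1) ++ w :: L.drop (i+1)).Nodup :=
      hperm.nodup_iff.mpr (List.nodup_cons.mpr ⟨hw, Lnd⟩)
    have hlen1 : (L.take (i+1) ++ w :: L.drop (i+1)).length = t + 1 := by
      rw [hperm.length_eq, List.length_cons, Llen]
    have hne1 : (L.take (i+1) ++ w :: L.drop (i+1)) ≠ [] := by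
      simp
    have hhead : (L.take (i+1) ++ w :: L.drop (i+1)).head hne1 = u := by
      rw [List.head_append_left hAne]
      exact htakeHead _ hAne
    have hgetLast : (L.take (i+1) ++ w :: L.drop (i+1)).getLast hne1 = v := by
      rw [List.getLast_append_of_ne_nil _ (by simp)]
      rw [List.getLast_cons hBne]
      exact hdropLast _ hBne
    refine ⟨(Stmt17Aux.mkWalk G _ hchain hne1).copy hhead hgetLast, ?_, ?_⟩
    · rw [SimpleGraph.Walk.isPath_def, SimpleGraph.Walk.support_copy, Stmt17Aux.mkWalk_support]
      exact hnodup
    · rw [SimpleGraph.Walk.support_copy, Stmt17Aux.mkWalk_support]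
      exact hlen1
  -- Rotation C
  have rotC : ∀ w, w ∉ L → ∀ (i j : ℕ) (hij : i < j) (hj : j + 1 < L.length),
      G.Adj w (L[i]'(by omega)) → G.Adj w (L[j]'(by omega)) →
      G.Adj (L[i+1]'(by omega)) (L[j+1]'hj) → False := by
    intro w hw i j hij hj h1 h2 h3
    apply hmax
    have hiL : i < L.length := by omega
    have hi1L : i + 1 < L.length := by omega
    have hjL : j < L.length := by omega
    have hDlen : (L.drop (i+1)).length = L.length - (i+1) := List.length_drop
    have hMlen : ((L.drop (i+1)).take (j-i)).length = j - i := by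
      rw [List.length_take, hDlen]; omega
    have hCne : L.drop (j+1) ≠ [] := hdropne hj
    have hAne : L.take (i+1) ≠ [] := htakene (by omega)
    have hMne : (L.drop (i+1)).take (j-i) ≠ [] := by
      rw [← List.length_pos_iff, hMlen]; omega
    have hMrne : ((L.drop (i+1)).take (j-i)).reverse ≠ [] := by
      simp [hMne]
    have hDC : (L.drop (i+1)).drop (j-i) = L.drop (j+1) := by
      rw [List.drop_drop]
      congr 1
      omega
    have hLsplit : L = L.take (i+1) ++ ((L.drop (i+1)).take (j-i) ++ L.drop (j+1)) := by
      conv_lhs => rw [← List.take_append_drop (i+1) L]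
      congr 1
      conv_lhs => rw [← List.take_append_drop (j-i) (L.drop (i+1))]
      rw [hDC]
    have hMelem : ∀ (k) (hk : k < j - i),
        ((L.drop (i+1)).take (j-i))[k]'(by rw [hMlen]; omega) = L[i+1+k]'(by omega) := by
      intro k hk
      rw [List.getElem_take, List.getElem_drop]
    have hMhead : ((L.drop (i+1)).take (j-i)).head hMne = L[i+1]'hi1L := by
      rw [List.head_eq_getElem]
      have e := hMelem 0 (by omega)
      simpa using e
    have hMlast : ((L.drop (i+1)).take (j-i)).getLast hMne = L[j]'hjL := by
      rw [List.getLast_eq_getElem]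
      have e2 : ((L.drop (i+1)).take (j-i))[((L.drop (i+1)).take (j-i)).length - 1]'(by
          rw [hMlen]; omega) =
          ((L.drop (i+1)).take (j-i))[j-i-1]'(by rw [hMlen]; omega) := by
        congr 1
        rw [hMlen]
      rw [e2, hMelem (j-i-1) (by omega)]
      congr 1
      omega
    have hChead : (L.drop (j+1)).head hCne = L[j+1]'hj := by
      rw [List.head_eq_getElem, List.getElem_drop]
    have hcL := Lch
    rw [hLsplit] at hcL
    obtain ⟨cA, cMC, _⟩ := List.isChain_append.mp hcL
    obtain ⟨cM, cC, _⟩ := List.isChain_append.mp cMC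
    have cMr : ((L.drop (i+1)).take (j-i)).reverse.Chain' G.Adj :=
      List.isChain_reverse.mpr (List.IsChain.imp (fun a b hab => G.adj_symm hab) cM)
    have hchain : (L.take (i+1) ++ w :: (((L.drop (i+1)).take (j-i)).reverse ++
        L.drop (j+1))).Chain' G.Adj := by
      refine List.isChain_append.mpr ⟨cA, ?_, ?_⟩
      · refine List.isChain_cons.mpr ⟨?_, ?_⟩
        · intro z hz
          rw [List.head?_eq_head (by simp [hMrne]), Option.mem_def, Option.some.injEq] at hz
          subst hz
          rw [List.head_append_left hMrne, List.head_reverse, hMlast]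
          exact h2
        · refine List.isChain_append.mpr ⟨cMr, cC, ?_⟩
          intro a ha b hb
          rw [List.getLast?_eq_getLast hMrne, Option.mem_def, Option.some.injEq] at ha
          rw [List.head?_eq_head hCne, Option.mem_def, Option.some.injEq] at hb
          subst ha; subst hb
          rw [List.getLast_reverse, hMhead, hChead]
          exact h3
      · intro a ha b hb
        simp only [List.head?_cons, Option.mem_def, Option.some.injEq] at hb
        subst hb
        rw [List.getLast?_eq_getLast hAne, Option.mem_def, Option.some.injEq] at ha
        subst ha
        rw [htakeLast i hiL]
        exact h1.symm
    have hperm : List.Perm (L.take (i+1) ++ w :: (((L.drop (i+1)).take (j-i)).reverse ++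
        L.drop (j+1))) (w :: L) := by
      refine List.Perm.trans List.perm_middle (List.Perm.cons w ?_)
      conv_rhs => rw [hLsplit]
      exact (((L.drop (i+1)).take (j-i)).reverse_perm.append_right _).append_left _
    have hnodup := hperm.nodup_iff.mpr (List.nodup_cons.mpr ⟨hw, Lnd⟩)
    have hlen1 : (L.take (i+1) ++ w :: (((L.drop (i+1)).take (j-i)).reverse ++
        L.drop (j+1))).length = t + 1 := by
      rw [hperm.length_eq, List.length_cons, Llen]
    have hne1 : (L.take (i+1) ++ w :: (((L.drop (i+1)).take (j-i)).reverse ++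
        L.drop (j+1))) ≠ [] := by simp
    have hhead : (L.take (i+1) ++ w :: (((L.drop (i+1)).take (j-i)).reverse ++
        L.drop (j+1))).head hne1 = u := by
      rw [List.head_append_left hAne]
      exact htakeHead _ hAne
    have hgetLast : (L.take (i+1) ++ w :: (((L.drop (i+1)).take (j-i)).reverse ++
        L.drop (j+1))).getLast hne1 = v := by
      rw [List.getLast_append_of_ne_nil _ (by simp [hCne])]
      rw [List.getLast_cons (by simp [hCne])]
      rw [List.getLast_append_of_ne_nil _ hCne]
      exact hdropLast _ hCne
    refine ⟨(Stmt17Aux.mkWalk G _ hchain hne1).copy hhead hgetLast, ?_, ?_⟩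
    · rw [SimpleGraph.Walk.isPath_def, SimpleGraph.Walk.support_copy, Stmt17Aux.mkWalk_support]
      exact hnodup
    · rw [SimpleGraph.Walk.support_copy, Stmt17Aux.mkWalk_support]
      exact hlen1
  -- setup finsets
  set Pfin : Finset α := L.toFinset with hPfin
  set Rset : Finset α := Finset.univ \ Pfin with hRset
  have hPfincard : Pfin.card = t := by
    rw [hPfin, List.toFinset_card_of_nodup Lnd, Llen]
  have hRcard : Rset.card = s := by
    rw [hRset, Finset.card_sdiff_of_subset (Finset.subset_univ _), Finset.card_univ, hcard, hPfincard]
    omega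
  have hdisj : ∀ a ∈ Rset, a ∉ Pfin := by
    intro a ha
    rw [hRset, Finset.mem_sdiff] at ha
    exact ha.2
  have hRnotL : ∀ a ∈ Rset, a ∉ L := by
    intro a ha hmem
    exact hdisj a ha (by rw [hPfin]; exact List.mem_toFinset.mpr hmem)
  set Cfun : α → α → Finset α :=
    fun r r' => Pfin.filter (fun p => ¬ G.Adj r p ∧ ¬ G.Adj r' p) with hCfun
  have hCsub : ∀ r r', ∀ p ∈ Cfun r r', p ∈ Pfin ∧ ¬ G.Adj r p ∧ ¬ G.Adj r' p := by
    intro r r' p hp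
    rw [hCfun] at hp
    simp only [Finset.mem_filter] at hp
    exact ⟨hp.1, hp.2⟩
  by_cases hstar : ∀ r ∈ Rset, ∀ r' ∈ Rset, r ≠ r' → s - 1 ≤ (Cfun r r').card
  · -- LEFT branch
    left
    intro x y hx hy hxy
    have hxR : x ∈ Rset := by
      rw [hRset, Finset.mem_sdiff]
      exact ⟨Finset.mem_univ _, fun h => hx (List.mem_toFinset.mp (hPfin ▸ h))⟩
    have hyR : y ∈ Rset := by
      rw [hRset, Finset.mem_sdiff]
      exact ⟨Finset.mem_univ _, fun h => hy (List.mem_toFinset.mp (hPfin ▸ h))⟩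
    set mid : List α := ((Rset.erase x).erase y).toList with hmid
    have hyRx : y ∈ Rset.erase x := Finset.mem_erase.mpr ⟨fun h => hxy h.symm, hyR⟩
    have hmidlen : mid.length = s - 2 := by
      rw [hmid, Finset.length_toList, Finset.card_erase_of_mem hyRx,
        Finset.card_erase_of_mem hxR, hRcard]
      omega
    have hmidmem : ∀ a ∈ mid, a ∈ Rset ∧ a ≠ x ∧ a ≠ y := by
      intro a ha
      rw [hmid, Finset.mem_toList, Finset.mem_erase, Finset.mem_erase] at ha
      exact ⟨ha.2.2, ha.2.1, ha.1⟩
    set rs : List α := x :: (mid ++ [y]) with hrs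
    have hrsne : rs ≠ [] := by simp [hrs]
    have hrsnd : rs.Nodup := by
      rw [hrs]
      refine List.nodup_cons.mpr ⟨?_, ?_⟩
      · simp only [List.mem_append, List.mem_singleton]
        rintro (h | h)
        · exact (hmidmem x h).2.1 rfl
        · exact hxy h
      · refine List.Nodup.append ?_ (by simp) ?_
        · rw [hmid]; exact Finset.nodup_toList _
        · intro a ha hb
          simp only [List.mem_singleton] at hb
          exact (hmidmem a ha).2.2 hb
    have hrsmem : ∀ a ∈ rs, a ∈ Rset := by
      intro a ha
      rw [hrs] at ha
      simp only [List.mem_cons, List.mem_append, List.mem_singleton, List.not_mem_nil,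
        or_false] at ha
      rcases ha with h | h | h
      · exact h ▸ hxR
      · exact (hmidmem a h).1
      · exact h ▸ hyR
    have hrslen : rs.length = s := by
      rw [hrs, List.length_cons, List.length_append, List.length_singleton, hmidlen]
      omega
    obtain ⟨W, hWpath, hWlen, _⟩ := Stmt17Aux.chainBuild G Pfin Rset s Cfun hdisj hCsub hstar
      rs hrsne ∅ hrsnd hrsmem (Finset.empty_subset _) (by simp [hrslen])
    have hhead : rs.head hrsne = x := rfl
    have hlast : rs.getLast hrsne = y := by
      have e : rs.getLast? = some y := by
        rw [hrs, ← List.cons_append, List.getLast?_concat]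
      rw [List.getLast?_eq_getLast hrsne, Option.some.injEq] at e
      exact e
    refine ⟨W.copy hhead hlast, ?_, ?_⟩
    · rw [SimpleGraph.Walk.isPath_def, SimpleGraph.Walk.support_copy]
      exact hWpath.support_nodup
    · rw [SimpleGraph.Walk.support_copy, hWlen, hrslen]
  · -- RIGHT branch
    right
    push_neg at hstar
    obtain ⟨r, hrR, r', hr'R, hrr', hsmall⟩ := hstar
    -- coverage
    have hcover : Pfin ⊆ (Cfun r r') ∪ Pfin.filter (fun p => G.Adj r p) ∪
        Pfin.filter (fun p => G.Adj r' p) := by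
      intro p hp
      by_cases h1 : G.Adj r p
      · exact Finset.mem_union_left _ (Finset.mem_union_right _ (Finset.mem_filter.mpr ⟨hp, h1⟩))
      · by_cases h2 : G.Adj r' p
        · exact Finset.mem_union_right _ (Finset.mem_filter.mpr ⟨hp, h2⟩)
        · exact Finset.mem_union_left _ (Finset.mem_union_left _
            (by rw [hCfun]; exact Finset.mem_filter.mpr ⟨hp, h1, h2⟩))
    have hcardsum : t ≤ (Cfun r r').card + (Pfin.filter (fun p => G.Adj r p)).card +
        (Pfin.filter (fun p => G.Adj r' p)).card := by
      calc t = Pfin.card := hPfincard.symm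
      _ ≤ ((Cfun r r') ∪ Pfin.filter (fun p => G.Adj r p) ∪
          Pfin.filter (fun p => G.Adj r' p)).card := Finset.card_le_card hcover
      _ ≤ _ := by
        refine le_trans (Finset.card_union_le _ _) ?_
        exact Nat.add_le_add_right (Finset.card_union_le _ _) _
    have hbig : ∃ w ∈ Rset, 2*s + 1 ≤ (Pfin.filter (fun p => G.Adj w p)).card := by
      by_contra hcon
      push_neg at hcon
      have h1 := hcon r hrR
      have h2 := hcon r' hr'R
      omega
    obtain ⟨w, hwR, hwcard⟩ := hbig
    have hwL : w ∉ L := hRnotL w hwR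
    set Aw : Finset α := (Pfin.filter (fun p => G.Adj w p)).erase v with hAw
    have hAwcard : 2*s ≤ Aw.card := by
      rw [hAw]
      have := Finset.pred_card_le_card_erase (a := v) (s := Pfin.filter (fun p => G.Adj w p))
      omega
    obtain ⟨A2, hA2sub, hA2card⟩ := Finset.exists_subset_card_eq hAwcard
    have hA2mem : ∀ p ∈ A2, p ∈ L ∧ p ≠ v ∧ G.Adj w p := by
      intro p hp
      have := hA2sub hp
      rw [hAw, Finset.mem_erase, Finset.mem_filter] at this
      exact ⟨List.mem_toFinset.mp (hPfin ▸ this.2.1), this.1, this.2.2⟩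
    -- index facts
    have hidx : ∀ p ∈ A2, L.idxOf p + 1 < L.length := by
      intro p hp
      obtain ⟨hpL, hpv, _⟩ := hA2mem p hp
      have h1 : L.idxOf p < L.length := List.idxOf_lt_length_iff.mpr hpL
      rcases Nat.lt_or_ge (L.idxOf p + 1) L.length with h | h
      · exact h
      · exfalso
        apply hpv
        have e1 : L[L.idxOf p]'h1 = p := List.getElem_idxOf h1
        have e2 : L[L.idxOf p]'h1 = L[L.length - 1]'(by omega) := by
          congr 1
          omega
        rw [e1] at e2
        rw [e2, ← List.getLast_eq_getElem Lne]
        exact hLlast Lne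
    set succ : α → α := fun p => L.getD (L.idxOf p + 1) v with hsucc
    have hsuccval : ∀ p (hp : p ∈ A2), succ p = L[L.idxOf p + 1]'(hidx p hp) := by
      intro p hp
      rw [hsucc]
      exact List.getD_eq_getElem _ _ (hidx p hp)
    have hsuccL : ∀ p ∈ A2, succ p ∈ L := by
      intro p hp
      rw [hsuccval p hp]
      exact List.getElem_mem _
    have hA2get : ∀ p (hp : p ∈ A2), L[L.idxOf p]'(by have := hidx p hp; omega) = p := by
      intro p hp
      exact List.getElem_idxOf _
    -- key: no G-adjacency among w and successors
    have hkey1 : ∀ p ∈ A2, ¬ G.Adj w (succ p) := by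
      intro p hp hadj
      refine rotA w hwL (L.idxOf p) (hidx p hp) ?_ ?_
      · rw [hA2get p hp]
        exact (hA2mem p hp).2.2
      · rw [← hsuccval p hp]
        exact hadj
    have hkey2 : ∀ p ∈ A2, ∀ p' ∈ A2, L.idxOf p < L.idxOf p' →
        ¬ G.Adj (succ p) (succ p') := by
      intro p hp p' hp' hlt hadj
      rcases Nat.lt_or_ge (L.idxOf p + 1) (L.idxOf p') with hcase | hcase
      · -- use rotC
        refine rotC w hwL (L.idxOf p) (L.idxOf p') hlt (hidx p' hp') ?_ ?_ ?_
        · rw [hA2get p hp]; exact (hA2mem p hp).2.2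
        · rw [hA2get p' hp']; exact (hA2mem p' hp').2.2
        · rw [← hsuccval p hp, ← hsuccval p' hp']
          exact hadj
      · -- indexOf p' = indexOf p + 1 : use rotA
        have heq : L.idxOf p' = L.idxOf p + 1 := by omega
        refine rotA w hwL (L.idxOf p) (hidx p hp) ?_ ?_
        · rw [hA2get p hp]; exact (hA2mem p hp).2.2
        · have : L[L.idxOf p + 1]'(hidx p hp) = L[L.idxOf p']'(by have := hidx p hp; omega) := by
            congr 1
            omega
          rw [this, hA2get p' hp']
          exact (hA2mem p' hp').2.2
    have hsuccinj : Set.InjOn succ A2 := by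
      intro p hp p' hp' heq
      rw [hsuccval p hp, hsuccval p' hp'] at heq
      have := (Lnd.getElem_inj_iff).mp heq
      have h2 : L[L.idxOf p]'(by have := hidx p hp; omega) =
          L[L.idxOf p']'(by have := hidx p' hp'; omega) := by
        congr 1
        omega
      rw [hA2get p hp, hA2get p' hp'] at h2
      exact h2
    refine ⟨insert w (A2.image succ), ?_⟩
    rw [SimpleGraph.isNClique_iff]
    constructor
    · -- clique
      intro a ha b hb hab
      simp only [Finset.coe_insert, Set.mem_insert_iff, Finset.coe_image, Set.mem_image,
        Finset.mem_coe] at ha hb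
      have hadjsym : ∀ p ∈ A2, Gᶜ.Adj w (succ p) := by
        intro p hp
        rw [SimpleGraph.compl_adj]
        exact ⟨fun h => hwL (h ▸ hsuccL p hp), hkey1 p hp⟩
      have hadjss : ∀ p ∈ A2, ∀ p' ∈ A2, succ p ≠ succ p' → Gᶜ.Adj (succ p) (succ p') := by
        intro p hp p' hp' hne
        rw [SimpleGraph.compl_adj]
        refine ⟨hne, ?_⟩
        have hpne : L.idxOf p ≠ L.idxOf p' := by
          intro h
          apply hne
          rw [hsuccval p hp, hsuccval p' hp']
          congr 1
          omega
        rcases Nat.lt_or_ge (L.idxOf p) (L.idxOf p') with h | h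
        · exact hkey2 p hp p' hp' h
        · intro hadj
          exact hkey2 p' hp' p hp (by omega) hadj.symm
      rcases ha with ha | ⟨p, hp, hpa⟩
      · rcases hb with hb | ⟨p', hp', hpb⟩
        · exact absurd (ha.trans hb.symm) hab
        · subst ha; rw [← hpb]; exact hadjsym p' hp'
      · rcases hb with hb | ⟨p', hp', hpb⟩
        · subst hb; rw [← hpa]; exact (hadjsym p hp).symm
        · rw [← hpa, ← hpb]
          exact hadjss p hp p' hp' (by rw [hpa, hpb]; exact hab)
    · -- card
      rw [Finset.card_insert_of_notMem, Finset.card_image_of_injOn hsuccinj, hA2card]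
      intro hmem
      rw [Finset.mem_image] at hmem
      obtain ⟨p, hp, hpw⟩ := hmem
      exact hwL (hpw ▸ hsuccL p hp)
end

section
/- Let k ≥ 3 be an integer and let G be a graph on n ≥ 1 vertices with l edges. Then r(G, C_k) ≤ n + 2lk − 2l/n. -/
open SimpleGraph

/-- `G` contains a copy of `H` as a subgraph. -/
def Contains {α β : Type*} (G : SimpleGraph α) (H : SimpleGraph β) : Prop :=
  ∃ f : β ↪ α, ∀ a b : β, H.Adj a b → G.Adj (f a) (f b)

/-- Every graph on `N` vertices contains `H₁`, or its complement contains `H₂`. -/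
def RamseyProp (N : ℕ) {α β : Type*} (H₁ : SimpleGraph α) (H₂ : SimpleGraph β) : Prop :=
  ∀ F : SimpleGraph (Fin N), Contains F H₁ ∨ Contains Fᶜ H₂

/-- The Ramsey number `r(H₁, H₂)`. -/
noncomputable def ramseyNumber {α β : Type*} (H₁ : SimpleGraph α) (H₂ : SimpleGraph β) : ℕ :=
  sInf {N : ℕ | 0 < N ∧ RamseyProp N H₁ H₂}

open Finset

lemma exists_indep {V : Type*} [DecidableEq V] (H : SimpleGraph V) (c : ℕ)
    (T : Finset V)
    (hpath : ¬ ∃ ls : List V, ls.Nodup ∧ ls.length = c + 1 ∧ (∀ x ∈ ls, x ∈ T) ∧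
      ls.Chain' H.Adj) :
    ∃ I : Finset V, I ⊆ T ∧ (∀ a ∈ I, ∀ b ∈ I, a ≠ b → ¬ H.Adj a b) ∧ T.card ≤ c * I.card := by
  classical
  suffices Hn : ∀ n : ℕ, ∀ T : Finset V, T.card = n →
      (¬ ∃ ls : List V, ls.Nodup ∧ ls.length = c + 1 ∧ (∀ x ∈ ls, x ∈ T) ∧ ls.Chain' H.Adj) →
      ∃ I : Finset V, I ⊆ T ∧ (∀ a ∈ I, ∀ b ∈ I, a ≠ b → ¬ H.Adj a b) ∧ T.card ≤ c * I.card by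
    exact Hn T.card T rfl hpath
  intro n
  induction n using Nat.strong_induction_on with
  | _ n ih =>
  intro T hTn hpath
  rcases T.eq_empty_or_nonempty with rfl | ⟨t, ht⟩
  · exact ⟨∅, by simp⟩
  -- `P ls` : `ls` is a nonempty path-list inside `T`
  set P : List V → Prop := fun ls => ls ≠ [] ∧ ls.Nodup ∧ (∀ x ∈ ls, x ∈ T) ∧ ls.Chain' H.Adj
    with hP
  have hPlen : ∀ ls, P ls → ls.length ≤ c := by
    intro ls ⟨_, h1, h2, h3⟩
    by_contra hlen
    push_neg at hlen
    refine hpath ⟨ls.take (c + 1), (List.take_sublist _ _).nodup h1, ?_, ?_, h3.take _⟩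
    · rw [List.length_take]; omega
    · intro x hx; exact h2 x ((List.take_sublist _ _).mem hx)
  set A : Set ℕ := {d | ∃ ls, P ls ∧ ls.length = d} with hA
  have hAne : A.Nonempty := ⟨1, [t], ⟨by simp, by simp, by simpa using ht, List.isChain_singleton _⟩, rfl⟩
  have hAbdd : BddAbove A := by
    refine ⟨c, fun d hd => ?_⟩
    obtain ⟨ls, hls, rfl⟩ := hd
    exact hPlen ls hls
  obtain ⟨ls, hls, hlsd⟩ : sSup A ∈ A := Nat.sSup_mem hAne hAbdd
  obtain ⟨hne, hnodup, hmem, hchain⟩ := hls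
  set v := ls.head hne with hv
  have hvls : v ∈ ls := List.head_mem hne
  have hvT : v ∈ T := hmem _ hvls
  -- maximality: no neighbor of `v` inside `T` outside `ls`
  have hmax : ∀ u ∈ T, u ∉ ls → ¬ H.Adj u v := by
    intro u hu hunls hadj
    have hP' : P (u :: ls) := by
      refine ⟨by simp, List.nodup_cons.mpr ⟨hunls, hnodup⟩, ?_, ?_⟩
      · intro x hx
        rcases List.mem_cons.mp hx with rfl | hx
        · exact hu
        · exact hmem x hx
      · rw [show List.Chain' H.Adj (u :: ls) = List.IsChain H.Adj (u :: ls) from rfl, List.isChain_cons]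
        refine ⟨?_, hchain⟩
        intro y hy
        have hyv : y = v := by
          rw [List.head?_eq_head hne] at hy
          exact (by simpa using hy : ls.head hne = y).symm
        rw [hyv]; exact hadj
    have : (u :: ls).length ∈ A := ⟨_, hP', rfl⟩
    have hle := le_csSup hAbdd this
    simp [← hlsd] at hle
  set T' := T \ ls.toFinset with hT'
  have hT'sub : T' ⊆ T := sdiff_subset
  have hvnot : v ∉ T' := by simp [hT', hvls]
  have hcardlt : T'.card < n := by
    rw [← hTn]
    exact card_lt_card ⟨hT'sub, fun hsub => hvnot (hsub hvT)⟩
  obtain ⟨I', hI'sub, hI'ind, hI'card⟩ := ih T'.card hcardlt T' rfl (by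
    intro ⟨ls', h1, h2, h3, h4⟩
    exact hpath ⟨ls', h1, h2, fun x hx => hT'sub (h3 x hx), h4⟩)
  have hvI' : v ∉ I' := fun h => hvnot (hI'sub h)
  refine ⟨insert v I', ?_, ?_, ?_⟩
  · intro a ha
    rcases mem_insert.mp ha with rfl | ha
    · exact hvT
    · exact hT'sub (hI'sub ha)
  · intro a ha b hb hab
    rcases mem_insert.mp ha with rfl | ha <;> rcases mem_insert.mp hb with rfl | hb
    · exact absurd rfl hab
    · intro hadj
      have hbT' := hI'sub hb
      have : b ∉ ls := by
        intro hbls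
        simp [hT', hbls] at hbT'
      exact hmax b (hT'sub hbT') this hadj.symm
    · intro hadj
      have haT' := hI'sub ha
      have : a ∉ ls := by
        intro hals
        simp [hT', hals] at haT'
      exact hmax a (hT'sub haT') this hadj
    · exact hI'ind a ha b hb hab
  · have h1 : T.card ≤ T'.card + ls.toFinset.card := by
      have : T ⊆ T' ∪ ls.toFinset := by
        intro x hx
        by_cases hxl : x ∈ ls.toFinset
        · exact mem_union_right _ hxl
        · exact mem_union_left _ (mem_sdiff.mpr ⟨hx, hxl⟩)
      calc T.card ≤ (T' ∪ ls.toFinset).card := card_le_card this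
        _ ≤ T'.card + ls.toFinset.card := card_union_le _ _
    have h2 : ls.toFinset.card ≤ c := (ls.toFinset_card_le).trans (hPlen ls ⟨hne, hnodup, hmem, hchain⟩)
    have h3 : T'.card ≤ c * I'.card := hI'card
    rw [card_insert_of_notMem hvI', Nat.mul_add, Nat.mul_one]
    omega

lemma contains_cycle_of_path {N c : ℕ} (H : SimpleGraph (Fin N)) (s₀ : Fin N)
    (ls : List (Fin N)) (hnd : ls.Nodup) (hlen : ls.length = c + 1)
    (hs₀ : s₀ ∉ ls) (hch : ls.Chain' H.Adj)
    (hadj : ∀ x ∈ ls, H.Adj x s₀) :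
    Contains H (cycleGraph (c + 2)) := by
  have hlt : ∀ i : Fin (c + 2), i.1 ≠ 0 → i.1 - 1 < ls.length := by
    intro i hi; have := i.isLt; omega
  have hgeteq : ∀ (i j : ℕ) (hi : i < ls.length) (hj : j < ls.length), i = j →
      ls.get ⟨i, hi⟩ = ls.get ⟨j, hj⟩ := by
    intro i j hi hj hij; cases hij; rfl
  have hgmem : ∀ (i : ℕ) (hi : i < ls.length), ls.get ⟨i, hi⟩ ∈ ls := by
    intro i hi; exact List.get_mem ls ⟨i, hi⟩
  set emb : Fin (c + 2) → Fin N :=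
    fun i => if h : i.1 = 0 then s₀ else ls.get ⟨i.1 - 1, hlt i h⟩ with hemb
  have hembinj : Function.Injective emb := by
    intro i j hij
    rw [hemb] at hij
    dsimp only at hij
    by_cases hi : (i : ℕ) = 0 <;> by_cases hj : (j : ℕ) = 0
    · exact Fin.ext (hi.trans hj.symm)
    · rw [dif_pos hi, dif_neg hj] at hij
      exact absurd (hij ▸ hgmem _ _) hs₀
    · rw [dif_neg hi, dif_pos hj] at hij
      exact absurd (hij ▸ hgmem _ _) hs₀
    · rw [dif_neg hi, dif_neg hj] at hij
      have := List.nodup_iff_injective_get.mp hnd hij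
      have hvals : i.1 - 1 = j.1 - 1 := congrArg Fin.val this
      exact Fin.ext (by omega)
  have hkey : ∀ a b : Fin (c + 2), b - a = 1 → H.Adj (emb a) (emb b) := by
    intro a b hba
    have hb : b = 1 + a := sub_eq_iff_eq_add.mp hba
    have hbval : (b : ℕ) = (1 + (a : ℕ)) % (c + 2) := by
      rw [hb, Fin.val_add, Fin.val_one]
    have ha2 : (a : ℕ) < c + 2 := a.isLt
    by_cases ha0 : (a : ℕ) = 0
    · have hbv : (b : ℕ) = 1 := by rw [hbval, ha0, Nat.mod_eq_of_lt (by omega)]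
      have hb0 : (b : ℕ) ≠ 0 := by omega
      have he1 : emb a = s₀ := dif_pos ha0
      have he2 : emb b = ls.get ⟨0, by omega⟩ :=
        (dif_neg hb0).trans (hgeteq _ _ _ _ (by omega))
      rw [he1, he2]
      exact (hadj _ (hgmem _ _)).symm
    · by_cases hac : (a : ℕ) = c + 1
      · have hbv : (b : ℕ) = 0 := by rw [hbval, hac, show 1 + (c + 1) = c + 2 from by omega, Nat.mod_self]
        have he2 : emb b = s₀ := dif_pos hbv
        have he1 : emb a = ls.get ⟨c, by omega⟩ :=
          (dif_neg ha0).trans (hgeteq _ _ _ _ (by omega))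
        rw [he1, he2]
        exact hadj _ (hgmem _ _)
      · have hbv : (b : ℕ) = (a : ℕ) + 1 := by
          rw [hbval, Nat.mod_eq_of_lt (by omega)]; omega
        have hb0 : (b : ℕ) ≠ 0 := by omega
        have he1 : emb a = ls.get ⟨a.1 - 1, hlt a ha0⟩ := dif_neg ha0
        have he2 : emb b = ls.get ⟨(a.1 - 1) + 1, by have := hlt a ha0; omega⟩ :=
          (dif_neg hb0).trans (hgeteq _ _ _ _ (by omega))
        rw [he1, he2]
        have := List.isChain_iff_getElem.mp hch (a.1 - 1) (by omega)
        simpa only [List.get_eq_getElem] using this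
  refine ⟨⟨emb, hembinj⟩, ?_⟩
  intro a b hab
  rw [cycleGraph_adj] at hab
  rcases hab with hab | hab
  · exact (hkey b a hab).symm
  · exact hkey a b hab

lemma main_embed {α : Type*} [Fintype α] [DecidableEq α] (G : SimpleGraph α)
    [DecidableRel G.Adj] (c : ℕ) (hc : 1 ≤ c) {N : ℕ} (F : SimpleGraph (Fin N))
    (hnc : ¬ Contains Fᶜ (cycleGraph (c + 2))) :
    ∀ s : Finset α,
      s.card + (∑ x ∈ s, ((s.filter (G.Adj x)).card)) * (c + 2)
        ≤ N + (∑ x ∈ s, ((s.filter (G.Adj x)).card)) ⌈/⌉ s.card →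
      ∃ f : {x : α // x ∈ s} → Fin N, Function.Injective f ∧
        ∀ x y : {x : α // x ∈ s}, G.Adj x.1 y.1 → F.Adj (f x) (f y) := by
  classical
  suffices Hn : ∀ n : ℕ, ∀ s : Finset α, s.card = n →
      s.card + (∑ x ∈ s, ((s.filter (G.Adj x)).card)) * (c + 2)
        ≤ N + (∑ x ∈ s, ((s.filter (G.Adj x)).card)) ⌈/⌉ s.card →
      ∃ f : {x : α // x ∈ s} → Fin N, Function.Injective f ∧
        ∀ x y : {x : α // x ∈ s}, G.Adj x.1 y.1 → F.Adj (f x) (f y) by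
    intro s; exact Hn s.card s rfl
  intro n
  induction n using Nat.strong_induction_on with
  | _ n ih =>
  intro s hsn h
  rcases s.eq_empty_or_nonempty with rfl | hsne
  · exact ⟨fun x => absurd x.2 (notMem_empty _), fun x => absurd x.2 (notMem_empty _),
      fun x => absurd x.2 (notMem_empty _)⟩
  -- choose a vertex of minimum degree within s
  obtain ⟨v, hvs, hvmin⟩ := s.exists_min_image (fun x => (s.filter (G.Adj x)).card) hsne
  set dg : α → ℕ := fun x => (s.filter (G.Adj x)).card with hdg
  set m : ℕ := ∑ x ∈ s, dg x with hm
  set s' : Finset α := s.erase v with hs'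
  set dg' : α → ℕ := fun x => (s'.filter (G.Adj x)).card with hdg'
  set m' : ℕ := ∑ x ∈ s', dg' x with hm'
  set δ : ℕ := dg v with hδ
  have hδ' : δ = (s'.filter (G.Adj v)).card := by
    rw [hδ, hdg, hs', filter_erase]
    have : v ∉ s.filter (G.Adj v) := fun hmem => (G.irrefl (mem_filter.mp hmem).2)
    rw [erase_eq_of_notMem this]
  have hn' : s'.card + 1 = n := by
    rw [hs', ← hsn]; exact card_erase_add_one hvs
  set n' : ℕ := s'.card with hns'
  -- degree sum identity
  have hms : m = m' + 2 * δ := by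
    have hsplit : (∑ x ∈ s', dg x) + dg v = m := by
      rw [hm, hs']; exact sum_erase_add s dg hvs
    have hxdg : ∀ x ∈ s', dg x = dg' x + (if G.Adj x v then 1 else 0) := by
      intro x hxs'
      show (s.filter (G.Adj x)).card = ((s.erase v).filter (G.Adj x)).card
        + (if G.Adj x v then 1 else 0)
      rw [filter_erase]
      by_cases hadj : G.Adj x v
      · have hvmem : v ∈ s.filter (G.Adj x) := mem_filter.mpr ⟨hvs, hadj⟩
        rw [if_pos hadj]
        exact (card_erase_add_one hvmem).symm
      · have hvmem : v ∉ s.filter (G.Adj x) := fun hmem => hadj (mem_filter.mp hmem).2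
        rw [if_neg hadj, erase_eq_of_notMem hvmem, Nat.add_zero]
    have hsum2 : (∑ x ∈ s', dg x) = m' + ∑ x ∈ s', (if G.Adj x v then 1 else 0) := by
      rw [hm', ← sum_add_distrib]
      exact sum_congr rfl hxdg
    have hcnt : (∑ x ∈ s', (if G.Adj x v then 1 else 0)) = δ := by
      rw [← card_filter, hδ']
      congr 1
      exact filter_congr (fun x _ => by rw [G.adj_comm])
    omega
  have hδm : n * δ ≤ m := by
    rw [hm, ← hsn]
    simpa using card_nsmul_le_sum s dg δ (fun x hx => hvmin x hx)
  -- basic ceilDiv facts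
  have hs1 : 0 < s.card := card_pos.mpr hsne
  have hcd1 : m ⌈/⌉ s.card ≤ m :=
    (ceilDiv_le_iff_le_mul hs1).mpr (Nat.le_mul_of_pos_left m hs1)
  have hcd2 : m ≤ s.card * (m ⌈/⌉ s.card) := by
    have := le_smul_ceilDiv (b := m) hs1
    simpa using this
  have hmK : m ≤ m * (c + 2) := Nat.le_mul_of_pos_right m (by omega)
  have hNn : s.card ≤ N := by
    have h2 : s.card + m * (c + 2) ≤ N + m * (c + 2) := by linarith
    linarith
  -- IH precondition
  have claim : m ⌈/⌉ s.card ≤ 1 + 2 * δ * (c + 2) + m' ⌈/⌉ n' := by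
    by_cases hn'0 : n' = 0
    · have hs'e : s' = ∅ := card_eq_zero.mp (by omega)
      have hm'0 : m' = 0 := by rw [hm', hs'e]; simp
      have hδ0 : δ = 0 := by rw [hδ', hs'e]; simp
      have hm0 : m = 0 := by omega
      rw [hm0]
      simp
    · have hn'pos : 0 < n' := Nat.pos_of_ne_zero hn'0
      set t : ℕ := 1 + 2 * δ * (c + 2) + m' ⌈/⌉ n' with ht
      apply (ceilDiv_le_iff_le_mul hs1).mpr
      have e0 : m' ≤ n' * (m' ⌈/⌉ n') := by
        have := le_smul_ceilDiv (b := m') hn'pos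
        simpa using this
      have et1 : m' ⌈/⌉ n' ≤ t := by rw [ht]; exact Nat.le_add_left _ _
      have et2 : 2 * δ * (c + 2) ≤ t := by
        rw [ht]; exact le_trans (Nat.le_add_left _ 1) (Nat.le_add_right _ _)
      have e1 : m' ≤ n' * t := e0.trans (Nat.mul_le_mul_left n' et1)
      have e2 : 2 * δ ≤ t := le_trans (Nat.le_mul_of_pos_right _ (by omega)) et2
      calc m = m' + 2 * δ := hms
        _ ≤ n' * t + t := add_le_add e1 e2
        _ = (n' + 1) * t := by ring
        _ = s.card * t := by rw [hn', hsn]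
  have hIH : n' + m' * (c + 2) ≤ N + m' ⌈/⌉ n' := by
    have key : n' + m' * (c + 2) + m ⌈/⌉ s.card
        ≤ N + m ⌈/⌉ s.card + m' ⌈/⌉ n' := by
      calc n' + m' * (c + 2) + m ⌈/⌉ s.card
          ≤ n' + m' * (c + 2) + (1 + 2 * δ * (c + 2) + m' ⌈/⌉ n') := by linarith
        _ = ((n' + 1) + (m' + 2 * δ) * (c + 2)) + m' ⌈/⌉ n' := by ring
        _ = (s.card + m * (c + 2)) + m' ⌈/⌉ n' := by rw [← hms, hn', hsn]
        _ ≤ (N + m ⌈/⌉ s.card) + m' ⌈/⌉ n' := by linarith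
    linarith
  obtain ⟨f, hfin, hfad⟩ := ih n' (by omega) s' rfl (by
    show s'.card + (∑ x ∈ s', dg' x) * (c + 2) ≤ N + (∑ x ∈ s', dg' x) ⌈/⌉ s'.card
    rw [← hm', ← hns']
    exact hIH)
  set img : Finset (Fin N) := univ.image f with himgdef
  have himg : img.card = n' := by
    rw [himgdef, card_image_of_injective _ hfin, card_univ, Fintype.card_coe, hns']
  set U : Finset (Fin N) := univ \ img with hUdef
  have hUcard : U.card + n' = N := by
    rw [hUdef, card_sdiff_of_subset (subset_univ _), card_univ, Fintype.card_fin, himg]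
    have : n' ≤ N := by omega
    omega
  by_cases hA : ∃ u ∈ U, ∀ x : {x : α // x ∈ s'}, G.Adj v x.1 → F.Adj u (f x)
  · -- extend the embedding
    obtain ⟨u, hu, huadj⟩ := hA
    have hunotimg : u ∉ img := (mem_sdiff.mp hu).2
    refine ⟨fun x => if h : x.1 = v then u else f ⟨x.1, mem_erase.mpr ⟨h, x.2⟩⟩, ?_, ?_⟩
    · intro x y hxy
      dsimp only at hxy
      by_cases hx : x.1 = v <;> by_cases hy : y.1 = v
      · exact Subtype.ext (hx.trans hy.symm)
      · rw [dif_pos hx, dif_neg hy] at hxy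
        exact absurd (hxy ▸ mem_image_of_mem f (mem_univ _) : u ∈ img) hunotimg
      · rw [dif_neg hx, dif_pos hy] at hxy
        exact absurd (hxy ▸ mem_image_of_mem f (mem_univ _) : u ∈ img) hunotimg
      · rw [dif_neg hx, dif_neg hy] at hxy
        have := congrArg Subtype.val (hfin hxy)
        exact Subtype.ext this
    · intro x y hGxy
      dsimp only
      by_cases hx : x.1 = v <;> by_cases hy : y.1 = v
      · exact absurd (hx ▸ hy ▸ hGxy) (G.irrefl)
      · rw [dif_pos hx, dif_neg hy]
        exact huadj ⟨y.1, mem_erase.mpr ⟨hy, y.2⟩⟩ (hx ▸ hGxy)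
      · rw [dif_neg hx, dif_pos hy]
        exact (huadj ⟨x.1, mem_erase.mpr ⟨hx, x.2⟩⟩ ((hy ▸ hGxy).symm)).symm
      · rw [dif_neg hx, dif_neg hy]
        exact hfad _ _ hGxy
  · -- blocked: find a large clique in F
    push_neg at hA
    have hUne : U.Nonempty := card_pos.mp (by omega)
    set Sf : Finset {x : α // x ∈ s'} := univ.filter (fun x => G.Adj v x.1) with hSfdef
    have hSfcard : Sf.card = δ := by
      rw [hδ']
      rw [← card_image_of_injective Sf Subtype.val_injective]
      congr 1
      ext a
      simp only [hSfdef, mem_image, mem_filter, mem_univ, true_and]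
      constructor
      · rintro ⟨x, hx, rfl⟩; exact ⟨x.2, hx⟩
      · rintro ⟨ha, hadj⟩; exact ⟨⟨a, ha⟩, hadj, rfl⟩
    have hcov : ∀ u ∈ U, ∃ x ∈ Sf, Fᶜ.Adj u (f x) := by
      intro u hu
      obtain ⟨x, hadj, hnadj⟩ := hA u hu
      refine ⟨x, mem_filter.mpr ⟨mem_univ _, hadj⟩, ?_⟩
      rw [compl_adj]
      refine ⟨?_, hnadj⟩
      intro heq
      exact (mem_sdiff.mp hu).2 (heq ▸ mem_image_of_mem f (mem_univ x))
    have hSfne : Sf.Nonempty := by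
      obtain ⟨u, hu⟩ := hUne
      obtain ⟨x, hx, _⟩ := hcov u hu
      exact ⟨x, hx⟩
    set Tf : {x : α // x ∈ s'} → Finset (Fin N) :=
      fun x => U.filter (fun u => Fᶜ.Adj u (f x)) with hTfdef
    obtain ⟨x₀, hx₀Sf, hx₀max⟩ := Sf.exists_max_image (fun x => (Tf x).card) hSfne
    have hUT : U.card ≤ δ * (Tf x₀).card := by
      have hsub : U ⊆ Sf.biUnion Tf := by
        intro u hu
        obtain ⟨x, hx, hadj⟩ := hcov u hu
        exact mem_biUnion.mpr ⟨x, hx, mem_filter.mpr ⟨hu, hadj⟩⟩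
      calc U.card ≤ (Sf.biUnion Tf).card := card_le_card hsub
        _ ≤ ∑ x ∈ Sf, (Tf x).card := card_biUnion_le
        _ ≤ Sf.card • (Tf x₀).card := sum_le_card_nsmul _ _ _ (fun x hx => hx₀max x hx)
        _ = δ * (Tf x₀).card := by rw [smul_eq_mul, hSfcard]
    set T : Finset (Fin N) := Tf x₀ with hTdef
    set s₀ : Fin N := f x₀ with hs₀def
    have hs₀img : s₀ ∈ img := mem_image_of_mem f (mem_univ x₀)
    have hTmem : ∀ u ∈ T, u ∈ U ∧ Fᶜ.Adj u s₀ := fun u hu => mem_filter.mp hu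
    have hT : n * c + 1 ≤ T.card := by
      by_contra hTc
      push_neg at hTc
      have hTc' : T.card ≤ n * c := by omega
      have h5 : U.card ≤ m * c := by
        calc U.card ≤ δ * T.card := hUT
          _ ≤ δ * (n * c) := Nat.mul_le_mul_left _ hTc'
          _ = (n * δ) * c := by ring
          _ ≤ m * c := Nat.mul_le_mul_right _ hδm
      have e : m * (c + 2) = m * c + 2 * m := by ring
      have h6 : m * c + m + 1 ≤ U.card := by
        linarith [h, hcd1, hUcard, hn', hsn, e]
      linarith [h5, h6]
    have hpathT : ¬ ∃ ls : List (Fin N), ls.Nodup ∧ ls.length = c + 1 ∧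
        (∀ x ∈ ls, x ∈ T) ∧ ls.Chain' Fᶜ.Adj := by
      rintro ⟨ls, hnd, hlen, hmemT, hch⟩
      apply hnc
      have hs₀ : s₀ ∉ ls := by
        intro hmm
        have := (hTmem _ (hmemT _ hmm)).1
        exact (mem_sdiff.mp this).2 hs₀img
      exact contains_cycle_of_path Fᶜ s₀ ls hnd hlen hs₀ hch
        (fun x hx => (hTmem _ (hmemT _ hx)).2)
    obtain ⟨I, hIT, hind, hIcard⟩ := exists_indep Fᶜ c T hpathT
    have hnI : n < I.card := by
      have h7 : n * c + 1 ≤ c * I.card := hT.trans hIcard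
      have h8 : c * n < c * I.card := by rw [mul_comm c n]; omega
      exact Nat.lt_of_mul_lt_mul_left h8
    have hcards : Fintype.card {x : α // x ∈ s} ≤ Fintype.card {u : Fin N // u ∈ I} := by
      rw [Fintype.card_coe, Fintype.card_coe, hsn]
      omega
    obtain ⟨e⟩ := Function.Embedding.nonempty_of_card_le hcards
    refine ⟨fun x => (e x).1, ?_, ?_⟩
    · intro x y hxy
      exact e.injective (Subtype.ext hxy)
    · intro x y hGxy
      have hne : x ≠ y := fun hxy => G.irrefl (hxy ▸ hGxy)
      have hvne : ((e x) : Fin N) ≠ ((e y) : Fin N) := by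
        intro hh
        exact hne (e.injective (Subtype.ext hh))
      by_contra hF
      refine hind _ (e x).2 _ (e y).2 hvne ?_
      rw [compl_adj]
      exact ⟨hvne, hF⟩

theorem stmt18 {α : Type*} [Fintype α] (k n l : ℕ) (hk : 3 ≤ k) (hn : 1 ≤ n)
    (G : SimpleGraph α) (hcard : Fintype.card α = n) (hl : G.edgeSet.ncard = l) :
    (ramseyNumber G (cycleGraph k) : ℝ) ≤ n + 2 * l * k - 2 * l / n := by
  classical
  have hDeq : DecidableEq α := Classical.decEq _
  have hDadj : DecidableRel G.Adj := Classical.decRel _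
  obtain ⟨c, rfl⟩ : ∃ c, k = c + 2 := ⟨k - 2, by omega⟩
  have hc : 1 ≤ c := by omega
  set m : ℕ := ∑ x : α, ((univ.filter (G.Adj x)).card) with hm
  have hm2l : m = 2 * l := by
    rw [hm]
    have hdeg : ∀ x : α, (univ.filter (G.Adj x)).card = G.degree x := by
      intro x; rw [degree, neighborFinset_eq_filter]
    rw [sum_congr rfl (fun x _ => hdeg x), sum_degrees_eq_twice_card_edges]
    congr 1
    rw [← hl, Set.ncard_eq_toFinset_card']
    convert rfl
    ext e; simp
  have hcdle : m ⌈/⌉ n ≤ m :=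
    (ceilDiv_le_iff_le_mul (show 0 < n by omega)).mpr (Nat.le_mul_of_pos_left m (by omega))
  have hmK : m ≤ m * (c + 2) := Nat.le_mul_of_pos_right m (by omega)
  have hmncd : m ≤ n * (m ⌈/⌉ n) := by
    have := le_smul_ceilDiv (b := m) (show 0 < n by omega)
    simpa using this
  set N₀ : ℕ := n + (m * (c + 2) - m ⌈/⌉ n) with hN₀
  have hRP : RamseyProp N₀ G (cycleGraph (c + 2)) := by
    intro F
    by_cases hnc : Contains Fᶜ (cycleGraph (c + 2))
    · exact Or.inr hnc
    · left
      have hcond : (univ : Finset α).card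
            + (∑ x ∈ (univ : Finset α), (((univ : Finset α).filter (G.Adj x)).card)) * (c + 2)
          ≤ N₀ + (∑ x ∈ (univ : Finset α), (((univ : Finset α).filter (G.Adj x)).card))
              ⌈/⌉ (univ : Finset α).card := by
        rw [card_univ, hcard, ← hm]
        have hAB : m ⌈/⌉ n ≤ m * (c + 2) := hcdle.trans hmK
        omega
      obtain ⟨f, hfin, hfad⟩ := main_embed G c hc F hnc univ hcond
      refine ⟨⟨fun a => f ⟨a, mem_univ a⟩, ?_⟩, ?_⟩
      · intro a b hab
        exact congrArg Subtype.val (hfin hab)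
      · intro a b hab
        exact hfad ⟨a, mem_univ a⟩ ⟨b, mem_univ b⟩ hab
  have hle : ramseyNumber G (cycleGraph (c + 2)) ≤ N₀ :=
    Nat.sInf_le ⟨by omega, hRP⟩
  have h1 : (ramseyNumber G (cycleGraph (c + 2)) : ℝ) ≤ (N₀ : ℝ) := Nat.cast_le.mpr hle
  refine h1.trans ?_
  have hAB : m ⌈/⌉ n ≤ m * (c + 2) := hcdle.trans hmK
  have hcast : (N₀ : ℝ) = (n : ℝ) + (m : ℝ) * ((c : ℝ) + 2) - ((m ⌈/⌉ n : ℕ) : ℝ) := by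
    rw [hN₀]
    push_cast [Nat.cast_sub hAB]
    ring
  have hnr : (0 : ℝ) < (n : ℝ) := by exact_mod_cast (show 0 < n by omega)
  have hdivle : 2 * (l : ℝ) / (n : ℝ) ≤ ((m ⌈/⌉ n : ℕ) : ℝ) := by
    rw [div_le_iff₀ hnr]
    have hcst : (m : ℝ) ≤ (n : ℝ) * ((m ⌈/⌉ n : ℕ) : ℝ) := by exact_mod_cast hmncd
    have hml : (m : ℝ) = 2 * (l : ℝ) := by exact_mod_cast hm2l
    linarith [hcst, hml, mul_comm ((n : ℝ)) (((m ⌈/⌉ n : ℕ) : ℝ))]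
  have hml : (m : ℝ) = 2 * (l : ℝ) := by exact_mod_cast hm2l
  rw [hcast, hml]
  push_cast
  linarith [hdivle]
end
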